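/- arXiv:1503.06208 — 3 statements merged into one kernel-verified Lean document; each statement's English description precedes it below -/
import Mathlib

section
/- Suppose {u_k} is a sequence in BV(Ω) with u_k → u in L¹_loc(Ω) and ∫_Ω |Du_k| → ∫_Ω |Du|. Then for every open set A ⊆ Ω, ∫_{closure(A) ∩ Ω} |Du| ≥ limsup_{k→∞} ∫_{closure(A) ∩ Ω} |Du_k|. In particular, if ∫_{∂A ∩ Ω} |Du| = 0, then ∫_A |Du| = lim_{k→∞} ∫_A |Du_k|. -/
open MeasureTheory Topology Filter Set Metric
open scoped ENNReal NNReal RealInnerProductSpace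

noncomputable section

abbrev Eucl (n : ℕ) := EuclideanSpace ℝ (Fin n)

namespace BVPaper

variable {n : ℕ}

/-- Integral of a function against a signed measure. -/
def sInt (φ : Eucl n → ℝ) (μ : SignedMeasure (Eucl n)) : ℝ :=
  (∫ x, φ x ∂μ.toJordanDecomposition.posPart) - ∫ x, φ x ∂μ.toJordanDecomposition.negPart

/-- `φ` is a smooth test function compactly supported in `Ω`. -/
def IsTest (Ω : Set (Eucl n)) (φ : Eucl n → ℝ) : Prop :=
  ContDiff ℝ (⊤ : ℕ∞) φ ∧ HasCompactSupport φ ∧ tsupport φ ⊆ Ω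

/-- `Du` is the distributional gradient of `u` on the open set `Ω`. -/
def IsDistGrad (Ω : Set (Eucl n)) (u : Eucl n → ℝ) (Du : Fin n → SignedMeasure (Eucl n)) : Prop :=
  ∀ (i : Fin n) (φ : Eucl n → ℝ), IsTest Ω φ →
    (∫ x in Ω, u x * fderiv ℝ φ x (EuclideanSpace.single i 1)) = - sInt φ (Du i)

/-- `ν` is the (Euclidean) total variation measure of the vector measure `Du`. -/
def IsVarMeasure (Du : Fin n → SignedMeasure (Eucl n)) (ν : Measure (Eucl n)) : Prop :=
  ∀ A : Set (Eucl n), MeasurableSet A →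
    ν A = ⨆ (P : ℕ → Set (Eucl n)) (_ : ∀ j, MeasurableSet (P j))
      (_ : Pairwise (Function.onFun Disjoint P)) (_ : (⋃ j, P j) = A),
      ∑' j, ENNReal.ofReal (Real.sqrt (∑ i : Fin n, ((Du i) (P j))^2))

/-- The total-variation norm `‖Du‖(Ω)`, as an infimum over representations. -/
def varNorm (Ω : Set (Eucl n)) (u : Eucl n → ℝ) : ℝ≥0∞ :=
  ⨅ (Du : Fin n → SignedMeasure (Eucl n)) (ν : Measure (Eucl n))
    (_ : IsDistGrad Ω u Du) (_ : IsVarMeasure Du ν), ν Ω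

/-- `U` is a bounded open set with smooth boundary. -/
def SmoothBoundedOpen (U : Set (Eucl n)) : Prop :=
  IsOpen U ∧ Bornology.IsBounded U ∧
    ∀ x ∈ frontier U, ∃ f : Eucl n → ℝ, ContDiff ℝ (⊤ : ℕ∞) f ∧ f x = 0 ∧
      fderiv ℝ f x ≠ 0 ∧ ∃ ε > 0, ∀ y ∈ Metric.ball x ε, (y ∈ U ↔ f y < 0)

/-- The value `μ(A)` of the signed measure `μ = μp - μn`. -/
def measVal (μp μn : Measure (Eucl n)) (A : Set (Eucl n)) : ℝ :=
  (μp A).toReal - (μn A).toReal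

/-- The integral `∫ g dμ` against the signed measure `μ = μp - μn`. -/
def muInt (μp μn : Measure (Eucl n)) (g : Eucl n → ℝ) : ℝ :=
  (∫ x, g x ∂μp) - ∫ x, g x ∂μn

/-- `ρ` is a measure on `Ω` which is locally finite in `Ω`. -/
def LocFinOn (Ω : Set (Eucl n)) (ρ : Measure (Eucl n)) : Prop :=
  ρ Ωᶜ = 0 ∧ ∀ x ∈ Ω, ∃ s ∈ 𝓝 x, ρ s ≠ ⊤

/-- `ustar` is the precise representative of `u` on `Ω` (defined `H^{n-1}`-a.e.). -/
def IsPreciseRepOn (Ω : Set (Eucl n)) (u ustar : Eucl n → ℝ) : Prop :=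
  ∀ᵐ x ∂((μH[((n : ℝ) - 1)] : Measure (Eucl n)).restrict Ω),
    Tendsto (fun r : ℝ =>
        (∫ y in Metric.ball x r ∩ Ω, u y) / (volume (Metric.ball x r ∩ Ω)).toReal)
      (𝓝[>] 0) (𝓝 (ustar x))

/-- `u ∈ BV_c^∞(Ω)` with gradient data `Du`, `ν`. -/
def IsBVcInf (Ω : Set (Eucl n)) (u : Eucl n → ℝ)
    (Du : Fin n → SignedMeasure (Eucl n)) (ν : Measure (Eucl n)) : Prop :=
  (∃ M, ∀ x, |u x| ≤ M) ∧ HasCompactSupport u ∧ tsupport u ⊆ Ω ∧ IntegrableOn u Ω ∧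
    IsDistGrad Ω u Du ∧ IsVarMeasure Du ν ∧ ν Ω ≠ ⊤

/-- The space `BV_{n/(n-1)}(ℝⁿ)`. -/
def BVnn1 (n : ℕ) : Set (Eucl n → ℝ) :=
  {u | AEStronglyMeasurable u volume ∧
    eLpNorm u ((n : ℝ≥0∞) / ((n : ℝ≥0∞) - 1)) volume ≠ ⊤ ∧
    ∃ Du ν, IsDistGrad Set.univ u Du ∧ IsVarMeasure Du ν ∧ ν Set.univ ≠ ⊤}

/-- The space `BV(ℝⁿ)`. -/
def BVfull (n : ℕ) : Set (Eucl n → ℝ) :=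
  {u | Integrable u volume ∧
    ∃ Du ν, IsDistGrad Set.univ u Du ∧ IsVarMeasure Du ν ∧ ν Set.univ ≠ ⊤}

/-- A functional on the function class `X` is linear. -/
def SubLinear (X : Set (Eucl n → ℝ)) (T : {u // u ∈ X} → ℝ) : Prop :=
  ∀ (u v w : {u // u ∈ X}) (a b : ℝ),
    (w : Eucl n → ℝ) = a • (u : Eucl n → ℝ) + b • (v : Eucl n → ℝ) →
      T w = a * T u + b * T v

/-- The operator norm of a functional on `X` w.r.t. the seminorm `p`. -/
def subDualNorm (X : Set (Eucl n → ℝ)) (p : (Eucl n → ℝ) → ℝ≥0∞)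
    (T : {u // u ∈ X} → ℝ) : ℝ≥0∞ :=
  ⨆ u : {u // u ∈ X}, ENNReal.ofReal |T u| / p (u : Eucl n → ℝ)


/-- A functional on distributions that is linear on test functions. -/
def TestLinear (T : (Eucl n → ℝ) → ℝ) : Prop :=
  ∀ (φ ψ : Eucl n → ℝ), IsTest Set.univ φ → IsTest Set.univ ψ → ∀ a b : ℝ,
    T (a • φ + b • ψ) = a * T φ + b * T ψ

/-- The dual norm of a distribution as a functional on `Ẇ^{1,1}(ℝⁿ)`,
computed on the dense class of test functions. -/
def distNormW11 (T : (Eucl n → ℝ) → ℝ) : ℝ≥0∞ :=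
  ⨆ (φ : Eucl n → ℝ) (_ : IsTest Set.univ φ),
    ENNReal.ofReal |T φ| / ∫⁻ x, (‖gradient φ x‖₊ : ℝ≥0∞)

/-- `T = div F` in the sense of distributions. -/
def IsDivOf (F : Eucl n → Eucl n) (T : (Eucl n → ℝ) → ℝ) : Prop :=
  ∀ φ : Eucl n → ℝ, IsTest Set.univ φ →
    T φ = - ∫ x, (inner ℝ (F x) (gradient φ x) : ℝ)

/-- `u` has zero trace on `∂Ω`. -/
def ZeroTrace (Ω : Set (Eucl n)) (u : Eucl n → ℝ) : Prop :=
  ∀ᵐ x ∂((μH[((n : ℝ) - 1)] : Measure (Eucl n)).restrict (frontier Ω)),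
    Tendsto (fun r : ℝ => (∫ y in Metric.ball x r ∩ Ω, |u y|) / r ^ n)
      (𝓝[>] 0) (𝓝 0)

/-- `Ω` has Lipschitz boundary: near each boundary point, after a rotation,
`Ω` is the open region above the graph of a Lipschitz function. -/
def LipschitzBoundary (Ω : Set (Eucl n)) : Prop :=
  ∀ x ∈ frontier Ω, ∃ r > (0 : ℝ), ∃ v : Eucl n, ‖v‖ = 1 ∧
    ∃ (g : Eucl n → ℝ) (L : ℝ≥0), LipschitzWith L g ∧
      Ω ∩ Metric.ball x r =
        {y ∈ Metric.ball x r | g (y - (inner ℝ y v : ℝ) • v) < (inner ℝ y v : ℝ)}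

/-- The space `BV_0(Ω)` of `BV(Ω)` functions with zero trace. -/
def BV0set (Ω : Set (Eucl n)) : Set (Eucl n → ℝ) :=
  {u | IntegrableOn u Ω ∧ ZeroTrace Ω u ∧
    ∃ Du ν, IsDistGrad Ω u Du ∧ IsVarMeasure Du ν ∧ ν Ω ≠ ⊤}

end BVPaper

/-!
The proof rests on lower semicontinuity on open sets: `‖Du‖(B) ≤ liminf ‖Du_k‖(B)` for open
`B ⊆ Ω`. By definition `‖Du‖(B)` is a supremum of finite sums `∑ |Du(P_j)|` over disjoint
measurable sets `P_j ⊆ B`. Squeeze each `P_j` between a compact `K_j ⊆ P_j` and an open `U_j ⊆ B`, the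
`U_j` pairwise disjoint, so that `|Du|(P_j \ K_j)` and `|Du|(U_j \ K_j)` are small, and pick smooth
cut-offs `1_{K_j} ≤ ψ_j ≤ 1_{U_j}`. Then `Du(P_j) ≈ ∫ ψ_j dDu = lim_k ∫ ψ_j dDu_k` (integrate by
parts against `u_k → u` in `L¹_loc`), and the layer-cake formula gives
`|∫ ψ_j dDu_k| ≤ ‖Du_k‖(U_j)`; summing over `j` gives the claim.

Applied to the open set `Ω \ closure A`, and combined with `‖Du_k‖(Ω) → ‖Du‖(Ω) < ∞`, this
yields the upper bound on `closure A ∩ Ω`. If `‖Du‖(∂A ∩ Ω) = 0` the two bounds pinch `‖Du_k‖(A)`.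
-/

theorem ENNReal.limsup_tsub_le {ι : Type*} {l : Filter ι} {a : ℝ≥0∞} {f g : ι → ℝ≥0∞}
    (hf : Tendsto f l (𝓝 a)) (ha : a ≠ ⊤) :
    limsup (fun i => f i - g i) l ≤ a - liminf g l := by
  have hfa : Tendsto (fun i => f i - a) l (𝓝 0) := by
    simpa using ENNReal.Tendsto.sub hf tendsto_const_nhds (Or.inr ha)
  calc limsup (fun i => f i - g i) l
      ≤ limsup ((fun i => f i - a) + fun i => a - g i) l :=
        limsup_le_limsup (.of_forall fun i => tsub_le_tsub_add_tsub)
    _ = a - liminf g l := by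
        rw [ENNReal.limsup_add_of_left_tendsto_zero hfa, limsup_const_sub _ _ ha]

theorem MeasureTheory.Measure.limsup_le_of_le_liminf_sdiff {α ι : Type*} [MeasurableSpace α]
    {l : Filter ι} {μ : Measure α} {μs : ι → Measure α} {Ω C : Set α} (hCΩ : C ⊆ Ω)
    (hC : MeasurableSet (Ω \ C)) (hμΩ : μ Ω ≠ ⊤) (hμsΩ : ∀ i, μs i Ω ≠ ⊤)
    (hΩ : Tendsto (fun i => μs i Ω) l (𝓝 (μ Ω)))
    (hsdiff : μ (Ω \ C) ≤ liminf (fun i => μs i (Ω \ C)) l) :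
    limsup (fun i => μs i C) l ≤ μ C := by
  have hsplit : ∀ ρ : Measure α, ρ Ω ≠ ⊤ → ρ C = ρ Ω - ρ (Ω \ C) := fun ρ hρ => by
    rw [← measure_sdiff sdiff_subset hC.nullMeasurableSet
      (ne_top_of_le_ne_top hρ (measure_mono sdiff_subset)), sdiff_sdiff_cancel_left hCΩ]
  simp_rw [hsplit _ (hμsΩ _), hsplit μ hμΩ]
  exact (ENNReal.limsup_tsub_le hΩ hμΩ).trans (tsub_le_tsub_left hsdiff _)

theorem EuclideanSpace.norm_le_sum_abs {ι : Type*} [Fintype ι] (x : EuclideanSpace ℝ ι) :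
    ‖x‖ ≤ ∑ i, |x i| := by
  refine (pow_le_pow_iff_left₀ (norm_nonneg x) (by positivity) two_ne_zero).mp ?_
  rw [EuclideanSpace.norm_sq_eq]
  simp_rw [Real.norm_eq_abs]
  exact Finset.sum_sq_le_sq_sum_of_nonneg fun i _ => abs_nonneg _

theorem norm_le_of_forall_inner_le {E : Type*} [NormedAddCommGroup E] [InnerProductSpace ℝ E]
    {w : E} {c : ℝ} (h : ∀ e : E, ‖e‖ ≤ 1 → ⟪e, w⟫ ≤ c) : ‖w‖ ≤ c := by
  rcases eq_or_ne w 0 with rfl | hw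
  · simpa using h 0 (by simp)
  · have hw' : ‖w‖ ≠ 0 := norm_ne_zero_iff.mpr hw
    convert h (‖w‖⁻¹ • w) (by rw [norm_smul, norm_inv, norm_norm, inv_mul_cancel₀ hw']) using 1
    rw [real_inner_smul_left, real_inner_self_eq_norm_sq]
    field_simp

theorem MeasureTheory.integrableOn_measureReal_le_Ioc {α : Type*} [MeasurableSpace α]
    (μ : Measure α) [IsFiniteMeasure μ] (ψ : α → ℝ) :
    IntegrableOn (fun t => μ.real {x | t ≤ ψ x}) (Ioc 0 1) := by
  have hanti : Antitone fun t => μ.real {x | t ≤ ψ x} := fun t t' htt' =>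
    measureReal_mono fun x hx => htt'.trans hx
  exact (hanti.antitoneOn _).integrableOn_isCompact isCompact_Icc |>.mono_set Ioc_subset_Icc_self

theorem MeasureTheory.abs_integral_sub_measureReal_le {α : Type*} [MeasurableSpace α]
    (μ : Measure α) [IsFiniteMeasure μ] {ψ : α → ℝ} (hψ : AEMeasurable ψ μ)
    (h01 : ∀ x, ψ x ∈ Icc (0 : ℝ) 1) {K E U : Set α} (hK : MeasurableSet K)
    (hE : MeasurableSet E) (hU : MeasurableSet U) (hψK : EqOn ψ 1 K) (hKE : K ⊆ E)
    (hψU : Function.support ψ ⊆ U) :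
    |∫ x, ψ x ∂μ - μ.real E| ≤ μ.real ((E ∪ U) \ K) := by
  have hS : MeasurableSet ((E ∪ U) \ K) := (hE.union hU).diff hK
  have hint : Integrable ψ μ := .of_mem_Icc 0 1 hψ (.of_forall h01)
  have pointwise : ∀ x, ‖ψ x - E.indicator 1 x‖ ≤ ((E ∪ U) \ K).indicator 1 x := by
    intro x
    by_cases hxK : x ∈ K
    · simp [hψK hxK, hKE hxK, hxK]
    by_cases hx : x ∈ E ∪ U
    · have hxS : x ∈ (E ∪ U) \ K := ⟨hx, hxK⟩
      rw [indicator_of_mem hxS, Pi.one_apply, Real.norm_eq_abs, abs_le]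
      by_cases hxE : x ∈ E <;> simp only [hxE, indicator_of_mem, indicator_of_notMem,
        not_false_eq_true, Pi.one_apply] <;> constructor <;> linarith [(h01 x).1, (h01 x).2]
    · have hxU : ψ x = 0 := Function.notMem_support.mp fun h => hx (Or.inr (hψU h))
      simp_all
  calc |∫ x, ψ x ∂μ - μ.real E| = ‖∫ x, (ψ x - E.indicator 1 x) ∂μ‖ := by
        rw [integral_sub (g := E.indicator 1) hint ((integrable_const 1).indicator hE),
          integral_indicator_one hE, Real.norm_eq_abs]
    _ ≤ ∫ x, ((E ∪ U) \ K).indicator 1 x ∂μ :=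
        norm_integral_le_of_norm_le ((integrable_const 1).indicator hS) (.of_forall pointwise)
    _ = μ.real ((E ∪ U) \ K) := integral_indicator_one hS

theorem MeasureTheory.tendsto_setIntegral_mul_of_tendsto_integral_abs_sub {X ι : Type*}
    [TopologicalSpace X] [MeasurableSpace X] [OpensMeasurableSpace X] {μ : Measure X}
    {l : Filter ι} {Ω : Set X} {u : X → ℝ} {uk : ι → X → ℝ} {g : X → ℝ} (hu : IntegrableOn u Ω μ)
    (huk : ∀ k, IntegrableOn (uk k) Ω μ) (hg : Continuous g) (hgc : HasCompactSupport g)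
    (hgΩ : tsupport g ⊆ Ω)
    (hL1 : Tendsto (fun k => ∫ x in tsupport g, |uk k x - u x| ∂μ) l (𝓝 0)) :
    Tendsto (fun k => ∫ x in Ω, uk k x * g x ∂μ) l (𝓝 (∫ x in Ω, u x * g x ∂μ)) := by
  obtain ⟨C, hC⟩ := hg.bounded_above_of_compact_support hgc
  have hK : MeasurableSet (tsupport g) := (isClosed_tsupport g).measurableSet
  have hint : ∀ v : X → ℝ, IntegrableOn v Ω μ → IntegrableOn (fun x => v x * g x) Ω μ :=
    fun v hv => hv.mul_bdd hg.aestronglyMeasurable (.of_forall hC)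
  have pointwise : ∀ k x, ‖uk k x * g x - u x * g x‖ ≤
      C * (tsupport g).indicator (fun y => |uk k y - u y|) x := by
    intro k x
    rw [← sub_mul, norm_mul, Real.norm_eq_abs, mul_comm]
    by_cases hx : x ∈ tsupport g
    · rw [indicator_of_mem hx]
      exact mul_le_mul_of_nonneg_right (hC x) (abs_nonneg _)
    · simp [image_eq_zero_of_notMem_tsupport hx, indicator_of_notMem hx]
  rw [tendsto_iff_norm_sub_tendsto_zero]
  refine squeeze_zero (fun _ => norm_nonneg _) (fun k => ?_) (by simpa using hL1.const_mul C)
  calc ‖∫ x in Ω, uk k x * g x ∂μ - ∫ x in Ω, u x * g x ∂μ‖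
      = ‖∫ x in Ω, (uk k x * g x - u x * g x) ∂μ‖ := by
        rw [integral_sub (hint _ (huk k)) (hint _ hu)]
    _ ≤ ∫ x in Ω, C * (tsupport g).indicator (fun y => |uk k y - u y|) x ∂μ :=
        norm_integral_le_of_norm_le ((((huk k).sub hu).abs.indicator hK).const_mul C)
          (.of_forall (pointwise k))
    _ = C * ∫ x in tsupport g, |uk k x - u x| ∂μ := by
        rw [integral_const_mul, setIntegral_indicator hK, inter_eq_self_of_subset_right hgΩ]

open scoped Manifold in
theorem IsCompact.exists_contDiff_eqOn_one {E : Type*} [NormedAddCommGroup E] [NormedSpace ℝ E]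
    [FiniteDimensional ℝ E] {K U : Set E} (hK : IsCompact K) (hU : IsOpen U) (hKU : K ⊆ U) :
    ∃ ψ : E → ℝ, ContDiff ℝ (⊤ : ℕ∞) ψ ∧ HasCompactSupport ψ ∧ tsupport ψ ⊆ U ∧
      EqOn ψ 1 K ∧ ∀ x, ψ x ∈ Icc (0 : ℝ) 1 := by
  obtain ⟨L, hL, hKL, hLU⟩ := exists_compact_between hK hU hKU
  obtain ⟨f, hf0, hf1, hf01⟩ := exists_contMDiffMap_zero_one_of_isClosed (𝓘(ℝ, E))
    isOpen_interior.isClosed_compl hK.isClosed (disjoint_compl_left_iff.mpr hKL)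
  have hfL : tsupport f ⊆ L :=
    closure_minimal (fun x hx => interior_subset (not_not.mp fun h => hx (hf0 h))) hL.isClosed
  exact ⟨f, contMDiff_iff_contDiff.mp f.contMDiff,
    .of_support_subset_isCompact hL ((subset_tsupport f).trans hfL), hfL.trans hLU, hf1, hf01⟩

theorem exists_isOpen_superset_pairwiseDisjoint {X ι : Type*} [MetricSpace X] (s : Finset ι)
    {K W : ι → Set X} (hK : ∀ i, IsCompact (K i)) (hW : ∀ i, IsOpen (W i))
    (hKW : ∀ i, K i ⊆ W i) (hd : (s : Set ι).PairwiseDisjoint K) :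
    ∃ U : ι → Set X, (∀ i, IsOpen (U i) ∧ K i ⊆ U i ∧ U i ⊆ W i) ∧
      (s : Set ι).PairwiseDisjoint U := by
  have hsmall : ∀ᶠ r in 𝓝[>] (0 : ℝ), ∀ i ∈ s, ∀ j ∈ s, i ≠ j →
      Disjoint (thickening r (K i)) (thickening r (K j)) := by
    simp only [eventually_all_finset]
    intro i hi j hj
    by_cases hij : i = j
    · simp [hij]
    obtain ⟨δ, hδ, hdδ⟩ := (hd hi hj hij).exists_thickenings (hK i) (hK j).isClosed
    filter_upwards [Ioo_mem_nhdsGT hδ] with r hr _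
    exact hdδ.mono (thickening_mono hr.2.le _) (thickening_mono hr.2.le _)
  obtain ⟨r, hr, hrpos⟩ := (hsmall.and self_mem_nhdsWithin).exists
  refine ⟨fun i => W i ∩ thickening r (K i), fun i => ⟨(hW i).inter isOpen_thickening,
    subset_inter (hKW i) (self_subset_thickening hrpos _), inter_subset_left⟩, ?_⟩
  exact fun i hi j hj hij => (hr i hi j hj hij).mono inter_subset_right inter_subset_right

theorem MeasurableSet.exists_isCompact_isOpen_measure_sdiff_le {X : Type*} [TopologicalSpace X]
    [MeasurableSpace X] [BorelSpace X] [T2Space X] {μ : Measure X} [IsFiniteMeasure μ]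
    [μ.InnerRegularCompactLTTop] [μ.OuterRegular] {P B : Set X} (hP : MeasurableSet P)
    (hB : IsOpen B) (hPB : P ⊆ B) {δ : ℝ≥0∞} (hδ : δ ≠ 0) :
    ∃ K W, IsCompact K ∧ K ⊆ P ∧ IsOpen W ∧ K ⊆ W ∧ W ⊆ B ∧ μ ((P ∪ W) \ K) ≤ δ := by
  have hδ2 : δ / 2 ≠ 0 := ENNReal.div_ne_zero.mpr ⟨hδ, ENNReal.ofNat_ne_top⟩
  obtain ⟨K, hKP, hK, hPK⟩ := hP.exists_isCompact_sdiff_lt (measure_ne_top μ P) hδ2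
  obtain ⟨W, hKW, hW, -, hWK⟩ :=
    hK.measurableSet.exists_isOpen_sdiff_lt (measure_ne_top μ K) hδ2
  refine ⟨K, W ∩ B, hK, hKP, hW.inter hB, subset_inter hKW (hKP.trans hPB),
    inter_subset_right, ?_⟩
  calc μ ((P ∪ W ∩ B) \ K) ≤ μ (P \ K ∪ W \ K) := by
        rw [union_sdiff_distrib]
        exact measure_mono (union_subset_union_right _ (sdiff_subset_sdiff_left inter_subset_left))
    _ ≤ δ / 2 + δ / 2 := (measure_union_le _ _).trans (add_le_add hPK.le hWK.le)
    _ = δ := ENNReal.add_halves δ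

namespace BVPaper

variable {n : ℕ}

-- `applyVec Du E` is the vector `Du(E) ∈ ℝⁿ`, and `sIntVec φ Du` is `∫ φ dDu ∈ ℝⁿ`.
def applyVec (Du : Fin n → SignedMeasure (Eucl n)) (E : Set (Eucl n)) : Eucl n :=
  WithLp.toLp 2 fun i => Du i E

def sIntVec (φ : Eucl n → ℝ) (Du : Fin n → SignedMeasure (Eucl n)) : Eucl n :=
  WithLp.toLp 2 fun i => sInt φ (Du i)

theorem norm_applyVec (Du : Fin n → SignedMeasure (Eucl n)) (E : Set (Eucl n)) :
    ‖applyVec Du E‖ = Real.sqrt (∑ i, (Du i E) ^ 2) := by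
  simp [applyVec, EuclideanSpace.norm_eq]

theorem IsTest.mono {U V : Set (Eucl n)} {φ : Eucl n → ℝ} (hφ : IsTest U φ) (hUV : U ⊆ V) :
    IsTest V φ :=
  ⟨hφ.1, hφ.2.1, hφ.2.2.trans hUV⟩

theorem IsVarMeasure.ofReal_norm_applyVec_le {Du : Fin n → SignedMeasure (Eucl n)}
    {ν : Measure (Eucl n)} (hν : IsVarMeasure Du ν) {E : Set (Eucl n)} (hE : MeasurableSet E) :
    ENNReal.ofReal ‖applyVec Du E‖ ≤ ν E := by
  let P : ℕ → Set (Eucl n) := fun j => if j = 0 then E else ∅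
  have hPm : ∀ j, MeasurableSet (P j) := fun j => by
    by_cases h : j = 0 <;> simp [P, h, hE]
  have hPd : Pairwise (Function.onFun Disjoint P) := fun a b hab => by
    by_cases ha : a = 0 <;> by_cases hb : b = 0 <;> simp_all [P, Function.onFun]
  have hPu : (⋃ j, P j) = E := by ext x; simp [P]
  rw [hν E hE, norm_applyVec]
  refine le_iSup_of_le P <| le_iSup_of_le hPm <| le_iSup_of_le hPd <| le_iSup_of_le hPu ?_
  rw [tsum_eq_single 0 fun j hj => by simp [P, hj]]
  simp [P]

theorem sInt_eq_integral_Ioc (s : SignedMeasure (Eucl n)) {ψ : Eucl n → ℝ} (hψ : Continuous ψ)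
    (h01 : ∀ x, ψ x ∈ Icc (0 : ℝ) 1) :
    sInt ψ s = ∫ t in Ioc 0 1, s {x | t ≤ ψ x} := by
  have layercake : ∀ μ : Measure (Eucl n), [IsFiniteMeasure μ] →
      ∫ x, ψ x ∂μ = ∫ t in Ioc 0 1, μ.real {x | t ≤ ψ x} := fun μ _ => by
    have hint : Integrable ψ μ := .of_mem_Icc 0 1 hψ.aemeasurable (.of_forall h01)
    exact hint.integral_eq_integral_Ioc_meas_le (.of_forall fun x => (h01 x).1)
      (.of_forall fun x => (h01 x).2)
  rw [sInt, layercake, layercake, ← integral_sub (integrableOn_measureReal_le_Ioc _ ψ)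
    (integrableOn_measureReal_le_Ioc _ ψ)]
  congr 1 with t
  exact (s.apply_eq_posPart_real_sub_negPart_real
    (isClosed_le continuous_const hψ).measurableSet).symm

theorem integrableOn_apply_le_Ioc (s : SignedMeasure (Eucl n)) {ψ : Eucl n → ℝ}
    (hψ : Continuous ψ) : IntegrableOn (fun t => s {x | t ≤ ψ x}) (Ioc 0 1) :=
  ((integrableOn_measureReal_le_Ioc _ ψ).sub (integrableOn_measureReal_le_Ioc _ ψ)).congr_fun
    (fun _ _ => (s.apply_eq_posPart_real_sub_negPart_real
      (isClosed_le continuous_const hψ).measurableSet).symm) measurableSet_Ioc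

theorem inner_sIntVec_eq_integral (Du : Fin n → SignedMeasure (Eucl n)) {ψ : Eucl n → ℝ}
    (hψ : Continuous ψ) (h01 : ∀ x, ψ x ∈ Icc (0 : ℝ) 1) (e : Eucl n) :
    ⟪e, sIntVec ψ Du⟫ = ∫ t in Ioc 0 1, ⟪e, applyVec Du {x | t ≤ ψ x}⟫ := by
  simp only [sIntVec, applyVec, PiLp.inner_apply, RCLike.inner_apply', conj_trivial,
    sInt_eq_integral_Ioc _ hψ h01]
  rw [integral_finsetSum _ fun i _ => (integrableOn_apply_le_Ioc (Du i) hψ).const_mul _]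
  simp only [integral_const_mul]

theorem IsVarMeasure.ofReal_norm_sIntVec_le {Du : Fin n → SignedMeasure (Eucl n)}
    {ν : Measure (Eucl n)} (hν : IsVarMeasure Du ν) {ψ : Eucl n → ℝ} (hψ : Continuous ψ)
    (h01 : ∀ x, ψ x ∈ Icc (0 : ℝ) 1) {U : Set (Eucl n)} (hψU : Function.support ψ ⊆ U) :
    ENNReal.ofReal ‖sIntVec ψ Du‖ ≤ ν U := by
  rcases eq_or_ne (ν U) ⊤ with hU | hU
  · simp [hU]
  rw [← ENNReal.ofReal_toReal hU]
  refine ENNReal.ofReal_le_ofReal (norm_le_of_forall_inner_le fun e he => ?_)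
  have level_le : ∀ t ∈ Ioc (0 : ℝ) 1, ⟪e, applyVec Du {x | t ≤ ψ x}⟫ ≤ (ν U).toReal := by
    intro t ht
    have hsub : {x | t ≤ ψ x} ⊆ U := fun x hx => hψU (ht.1.trans_le hx).ne'
    calc ⟪e, applyVec Du {x | t ≤ ψ x}⟫ ≤ ‖e‖ * ‖applyVec Du {x | t ≤ ψ x}‖ :=
          real_inner_le_norm _ _
      _ ≤ ‖applyVec Du {x | t ≤ ψ x}‖ := mul_le_of_le_one_left (norm_nonneg _) he
      _ ≤ (ν {x | t ≤ ψ x}).toReal := ENNReal.ofReal_le_iff_le_toReal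
          (ne_top_of_le_ne_top hU (measure_mono hsub)) |>.mp
          (hν.ofReal_norm_applyVec_le (isClosed_le continuous_const hψ).measurableSet)
      _ ≤ (ν U).toReal := ENNReal.toReal_mono hU (measure_mono hsub)
  calc ⟪e, sIntVec ψ Du⟫ = ∫ t in Ioc 0 1, ⟪e, applyVec Du {x | t ≤ ψ x}⟫ :=
        inner_sIntVec_eq_integral Du hψ h01 e
    _ ≤ ∫ _ in Ioc (0 : ℝ) 1, (ν U).toReal := by
        refine setIntegral_mono_on ?_ (integrableOn_const (by simp)) measurableSet_Ioc level_le
        simp only [applyVec, PiLp.inner_apply, RCLike.inner_apply', conj_trivial]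
        exact integrable_finsetSum _ fun i _ => (integrableOn_apply_le_Ioc (Du i) hψ).const_mul _
    _ = (ν U).toReal := by simp

theorem abs_sInt_sub_apply_le (s : SignedMeasure (Eucl n)) {ψ : Eucl n → ℝ} (hψ : Continuous ψ)
    (h01 : ∀ x, ψ x ∈ Icc (0 : ℝ) 1) {K E U : Set (Eucl n)} (hK : MeasurableSet K)
    (hE : MeasurableSet E) (hU : MeasurableSet U) (hψK : EqOn ψ 1 K) (hKE : K ⊆ E)
    (hψU : Function.support ψ ⊆ U) :
    |sInt ψ s - s E| ≤ s.totalVariation.real ((E ∪ U) \ K) := by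
  have hpos := abs_integral_sub_measureReal_le s.toJordanDecomposition.posPart
    hψ.aemeasurable h01 hK hE hU hψK hKE hψU
  have hneg := abs_integral_sub_measureReal_le s.toJordanDecomposition.negPart
    hψ.aemeasurable h01 hK hE hU hψK hKE hψU
  rw [sInt, s.apply_eq_posPart_real_sub_negPart_real hE, SignedMeasure.totalVariation,
    measureReal_add_apply]
  rw [abs_le] at hpos hneg ⊢
  constructor <;> linarith [hpos.1, hpos.2, hneg.1, hneg.2]

theorem norm_applyVec_sub_sIntVec_le (Du : Fin n → SignedMeasure (Eucl n)) {ψ : Eucl n → ℝ}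
    (hψ : Continuous ψ) (h01 : ∀ x, ψ x ∈ Icc (0 : ℝ) 1) {K E U : Set (Eucl n)}
    (hK : MeasurableSet K) (hE : MeasurableSet E) (hU : MeasurableSet U) (hψK : EqOn ψ 1 K)
    (hKE : K ⊆ E) (hψU : Function.support ψ ⊆ U) :
    ‖applyVec Du E - sIntVec ψ Du‖ ≤ (∑ i, (Du i).totalVariation).real ((E ∪ U) \ K) := by
  rw [measureReal_def, Measure.finsetSum_apply, ENNReal.toReal_sum fun i _ => measure_ne_top _ _]
  refine (EuclideanSpace.norm_le_sum_abs _).trans (Finset.sum_le_sum fun i _ => ?_)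
  rw [PiLp.sub_apply, applyVec, sIntVec, abs_sub_comm]
  exact abs_sInt_sub_apply_le (Du i) hψ h01 hK hE hU hψK hKE hψU

theorem exists_bump_family (σ : Measure (Eucl n)) [IsFiniteMeasure σ] {ι : Type*}
    (s : Finset ι) {B : Set (Eucl n)} (hB : IsOpen B) {P : ι → Set (Eucl n)}
    (hPm : ∀ j, MeasurableSet (P j)) (hPd : (s : Set ι).PairwiseDisjoint P) (hPB : ∀ j, P j ⊆ B)
    {δ : ℝ≥0∞} (hδ : δ ≠ 0) :
    ∃ (ψ : ι → Eucl n → ℝ) (K U : ι → Set (Eucl n)), (s : Set ι).PairwiseDisjoint U ∧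
      ∀ j, IsOpen (U j) ∧ U j ⊆ B ∧ IsTest (U j) (ψ j) ∧ (∀ x, ψ j x ∈ Icc (0 : ℝ) 1) ∧
        IsCompact (K j) ∧ K j ⊆ P j ∧ EqOn (ψ j) 1 (K j) ∧ σ ((P j ∪ U j) \ K j) ≤ δ := by
  choose K W hK hKP hW hKW hWB hσ using fun j =>
    (hPm j).exists_isCompact_isOpen_measure_sdiff_le (μ := σ) hB (hPB j) hδ
  obtain ⟨U, hU, hUd⟩ := exists_isOpen_superset_pairwiseDisjoint s hK hW hKW
    (hPd.mono fun j => hKP j)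
  choose hUo hKU hUW using hU
  choose ψ hψ hψc hψU hψK hψ01 using fun j => (hK j).exists_contDiff_eqOn_one (hUo j) (hKU j)
  refine ⟨ψ, K, U, hUd, fun j => ⟨hUo j, (hUW j).trans (hWB j), ⟨hψ j, hψc j, hψU j⟩, hψ01 j,
    hK j, hKP j, hψK j, le_trans (measure_mono ?_) (hσ j)⟩⟩
  exact sdiff_subset_sdiff_left (union_subset_union_right _ (hUW j))

section StrictConvergence

variable {Ω : Set (Eucl n)} {u : Eucl n → ℝ} {uk : ℕ → Eucl n → ℝ}
  {Du : Fin n → SignedMeasure (Eucl n)} {Duk : ℕ → Fin n → SignedMeasure (Eucl n)}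
  {ν : Measure (Eucl n)} {νk : ℕ → Measure (Eucl n)}

theorem tendsto_sIntVec (hu : IntegrableOn u Ω) (huk : ∀ k, IntegrableOn (uk k) Ω)
    (hDu : IsDistGrad Ω u Du) (hDuk : ∀ k, IsDistGrad Ω (uk k) (Duk k))
    (hL1loc : ∀ K : Set (Eucl n), K ⊆ Ω → IsCompact K →
      Tendsto (fun k => ∫ x in K, |uk k x - u x|) atTop (𝓝 0))
    {ψ : Eucl n → ℝ} (hψ : IsTest Ω ψ) :
    Tendsto (fun k => sIntVec ψ (Duk k)) atTop (𝓝 (sIntVec ψ Du)) := by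
  have hcomp : ∀ i, Tendsto (fun k => sInt ψ (Duk k i)) atTop (𝓝 (sInt ψ (Du i))) := by
    intro i
    obtain ⟨hsmooth, hcs, hψΩ⟩ := hψ
    set g : Eucl n → ℝ := fun x => fderiv ℝ ψ x (EuclideanSpace.single i 1)
    have hgΩ : tsupport g ⊆ Ω := (tsupport_fderiv_apply_subset ℝ _).trans hψΩ
    have hgc : HasCompactSupport g := hcs.fderiv_apply ℝ _
    have sInt_eq : ∀ {v Dv}, IsDistGrad Ω v Dv → sInt ψ (Dv i) = -∫ x in Ω, v x * g x :=
      fun hv => by rw [hv i ψ ⟨hsmooth, hcs, hψΩ⟩, neg_neg]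
    simp only [sInt_eq (hDuk _), sInt_eq hDu]
    exact (tendsto_setIntegral_mul_of_tendsto_integral_abs_sub hu huk
      ((hsmooth.continuous_fderiv (by simp)).clm_apply continuous_const) hgc hgΩ
      (hL1loc _ hgΩ hgc)).neg
  exact (PiLp.continuous_toLp 2 _).tendsto _ |>.comp (tendsto_pi_nhds.2 hcomp)

theorem ofReal_sum_norm_sIntVec_le_liminf (hu : IntegrableOn u Ω)
    (huk : ∀ k, IntegrableOn (uk k) Ω) (hDu : IsDistGrad Ω u Du)
    (hDuk : ∀ k, IsDistGrad Ω (uk k) (Duk k)) (hνk : ∀ k, IsVarMeasure (Duk k) (νk k))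
    (hL1loc : ∀ K : Set (Eucl n), K ⊆ Ω → IsCompact K →
      Tendsto (fun k => ∫ x in K, |uk k x - u x|) atTop (𝓝 0))
    {B : Set (Eucl n)} (hBΩ : B ⊆ Ω) {ι : Type*} (s : Finset ι) {U : ι → Set (Eucl n)}
    (hUm : ∀ j, MeasurableSet (U j)) (hUd : (s : Set ι).PairwiseDisjoint U) (hUB : ∀ j, U j ⊆ B)
    {ψ : ι → Eucl n → ℝ} (hψ : ∀ j, IsTest (U j) (ψ j)) (hψ01 : ∀ j x, ψ j x ∈ Icc (0 : ℝ) 1) :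
    ENNReal.ofReal (∑ j ∈ s, ‖sIntVec (ψ j) Du‖) ≤ liminf (fun k => νk k B) atTop := by
  have htend : Tendsto (fun k => ENNReal.ofReal (∑ j ∈ s, ‖sIntVec (ψ j) (Duk k)‖)) atTop
      (𝓝 (ENNReal.ofReal (∑ j ∈ s, ‖sIntVec (ψ j) Du‖))) :=
    ENNReal.tendsto_ofReal (tendsto_finsetSum _ fun j _ =>
      (tendsto_sIntVec hu huk hDu hDuk hL1loc ((hψ j).mono ((hUB j).trans hBΩ))).norm)
  refine htend.liminf_eq ▸ liminf_le_liminf (.of_forall fun k => ?_)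
  calc ENNReal.ofReal (∑ j ∈ s, ‖sIntVec (ψ j) (Duk k)‖)
      = ∑ j ∈ s, ENNReal.ofReal ‖sIntVec (ψ j) (Duk k)‖ :=
        ENNReal.ofReal_sum_of_nonneg fun j _ => norm_nonneg _
    _ ≤ ∑ j ∈ s, νk k (U j) := Finset.sum_le_sum fun j _ =>
        (hνk k).ofReal_norm_sIntVec_le (hψ j).1.continuous (hψ01 j)
          ((subset_tsupport _).trans (hψ j).2.2)
    _ = νk k (⋃ j ∈ s, U j) := (measure_biUnion_finset hUd fun j _ => hUm j).symm
    _ ≤ νk k B := measure_mono (iUnion₂_subset fun j _ => hUB j)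

theorem sum_ofReal_norm_applyVec_le_liminf (hu : IntegrableOn u Ω)
    (huk : ∀ k, IntegrableOn (uk k) Ω) (hDu : IsDistGrad Ω u Du)
    (hDuk : ∀ k, IsDistGrad Ω (uk k) (Duk k)) (hνk : ∀ k, IsVarMeasure (Duk k) (νk k))
    (hL1loc : ∀ K : Set (Eucl n), K ⊆ Ω → IsCompact K →
      Tendsto (fun k => ∫ x in K, |uk k x - u x|) atTop (𝓝 0))
    {B : Set (Eucl n)} (hBΩ : B ⊆ Ω) (hB : IsOpen B) {ι : Type*} (s : Finset ι)
    {P : ι → Set (Eucl n)} (hPm : ∀ j, MeasurableSet (P j))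
    (hPd : (s : Set ι).PairwiseDisjoint P) (hPB : ∀ j, P j ⊆ B) :
    ∑ j ∈ s, ENNReal.ofReal ‖applyVec Du (P j)‖ ≤ liminf (fun k => νk k B) atTop := by
  refine ENNReal.le_of_forall_pos_le_add fun ε hε _ => ?_
  set δ : ℝ := ε / (s.card + 1)
  have hδ : 0 < δ := by positivity
  obtain ⟨ψ, K, U, hUd, hbump⟩ := exists_bump_family (∑ i, (Du i).totalVariation) s hB hPm hPd
    hPB (ENNReal.ofReal_pos.2 hδ).ne'
  choose hUo hUB hψ hψ01 hK hKP hψK hσ using hbump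
  have approx : ∀ j, ‖applyVec Du (P j)‖ ≤ ‖sIntVec (ψ j) Du‖ + δ := fun j => by
    have hdiff := norm_applyVec_sub_sIntVec_le Du (hψ j).1.continuous (hψ01 j)
      (hK j).measurableSet (hPm j) (hUo j).measurableSet (hψK j) (hKP j)
      ((subset_tsupport _).trans (hψ j).2.2)
    have hσj : (∑ i, (Du i).totalVariation).real ((P j ∪ U j) \ K j) ≤ δ :=
      ENNReal.toReal_le_of_le_ofReal hδ.le (hσ j)
    linarith [norm_le_norm_add_norm_sub' (applyVec Du (P j)) (sIntVec (ψ j) Du)]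
  have limit := ofReal_sum_norm_sIntVec_le_liminf (νk := νk) hu huk hDu hDuk hνk hL1loc hBΩ s
    (fun j => (hUo j).measurableSet) hUd hUB hψ hψ01
  have hcard : (s.card : ℝ) * δ ≤ ε := by
    rw [mul_div_assoc', div_le_iff₀ (by positivity)]
    linarith [hε.le]
  calc ∑ j ∈ s, ENNReal.ofReal ‖applyVec Du (P j)‖
      = ENNReal.ofReal (∑ j ∈ s, ‖applyVec Du (P j)‖) :=
        (ENNReal.ofReal_sum_of_nonneg fun j _ => norm_nonneg _).symm
    _ ≤ ENNReal.ofReal (∑ j ∈ s, ‖sIntVec (ψ j) Du‖ + s.card * δ) := by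
        refine ENNReal.ofReal_le_ofReal ((Finset.sum_le_sum fun j _ => approx j).trans_eq ?_)
        rw [Finset.sum_add_distrib, Finset.sum_const, nsmul_eq_mul]
    _ ≤ ENNReal.ofReal (∑ j ∈ s, ‖sIntVec (ψ j) Du‖) + ENNReal.ofReal (s.card * δ) :=
        ENNReal.ofReal_add_le
    _ ≤ liminf (fun k => νk k B) atTop + ε := by
        gcongr
        exact (ENNReal.ofReal_le_ofReal hcard).trans_eq ENNReal.ofReal_coe_nnreal

theorem measure_le_liminf_of_isOpen (hu : IntegrableOn u Ω) (huk : ∀ k, IntegrableOn (uk k) Ω)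
    (hDu : IsDistGrad Ω u Du) (hDuk : ∀ k, IsDistGrad Ω (uk k) (Duk k))
    (hν : IsVarMeasure Du ν) (hνk : ∀ k, IsVarMeasure (Duk k) (νk k))
    (hL1loc : ∀ K : Set (Eucl n), K ⊆ Ω → IsCompact K →
      Tendsto (fun k => ∫ x in K, |uk k x - u x|) atTop (𝓝 0))
    {B : Set (Eucl n)} (hBΩ : B ⊆ Ω) (hB : IsOpen B) :
    ν B ≤ liminf (fun k => νk k B) atTop := by
  rw [hν B hB.measurableSet]
  refine iSup_le fun P => iSup_le fun hPm => iSup_le fun hPd => iSup_le fun hPB => ?_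
  rw [ENNReal.tsum_eq_iSup_sum]
  refine iSup_le fun s => ?_
  simpa only [norm_applyVec] using sum_ofReal_norm_applyVec_le_liminf hu huk hDu hDuk hνk hL1loc
    hBΩ hB s hPm (hPd.set_pairwise _) fun j => hPB ▸ subset_iUnion P j

end StrictConvergence

end BVPaper

open BVPaper

/-- Semicontinuity of total variations under strict convergence (Lemma 2.7/Giusti 1.13). -/
theorem statement1 (n : ℕ) (Ω : Set (Eucl n)) (hΩ : IsOpen Ω)
    (u : Eucl n → ℝ) (uk : ℕ → Eucl n → ℝ)
    (Du : Fin n → SignedMeasure (Eucl n)) (Duk : ℕ → Fin n → SignedMeasure (Eucl n))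
    (ν : Measure (Eucl n)) (νk : ℕ → Measure (Eucl n))
    (hu : IntegrableOn u Ω) (huk : ∀ k, IntegrableOn (uk k) Ω)
    (hDu : IsDistGrad Ω u Du) (hDuk : ∀ k, IsDistGrad Ω (uk k) (Duk k))
    (hν : IsVarMeasure Du ν) (hνk : ∀ k, IsVarMeasure (Duk k) (νk k))
    (hfin : ν Ω ≠ ⊤) (hfink : ∀ k, νk k Ω ≠ ⊤)
    (hL1loc : ∀ K : Set (Eucl n), K ⊆ Ω → IsCompact K →
      Tendsto (fun k => ∫ x in K, |uk k x - u x|) atTop (𝓝 0))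
    (hvar : Tendsto (fun k => νk k Ω) atTop (𝓝 (ν Ω))) :
    ∀ A : Set (Eucl n), A ⊆ Ω → IsOpen A →
      (Filter.limsup (fun k => νk k (closure A ∩ Ω)) atTop ≤ ν (closure A ∩ Ω)) ∧
      (ν (frontier A ∩ Ω) = 0 → Tendsto (fun k => νk k A) atTop (𝓝 (ν A))) := by
  intro A hAΩ hA
  have lsc : ∀ B ⊆ Ω, IsOpen B → ν B ≤ liminf (fun k => νk k B) atTop := fun B hBΩ hB =>
    measure_le_liminf_of_isOpen hu huk hDu hDuk hν hνk hL1loc hBΩ hB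
  have hopen : IsOpen (Ω \ (closure A ∩ Ω)) := by
    rw [sdiff_inter_self_eq_sdiff]
    exact hΩ.sdiff isClosed_closure
  have usc : limsup (fun k => νk k (closure A ∩ Ω)) atTop ≤ ν (closure A ∩ Ω) :=
    Measure.limsup_le_of_le_liminf_sdiff inter_subset_right hopen.measurableSet hfin hfink hvar
      (lsc _ sdiff_subset hopen)
  refine ⟨usc, fun hfr => ?_⟩
  have hclosure : ν (closure A ∩ Ω) = ν A := by
    rw [closure_eq_self_union_frontier, union_inter_distrib_right,
      inter_eq_self_of_subset_left hAΩ]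
    exact measure_congr (union_ae_eq_left_of_ae_eq_empty (ae_eq_empty.mpr hfr))
  refine tendsto_of_le_liminf_of_limsup_le (lsc A hAΩ hA) ?_
  calc limsup (fun k => νk k A) atTop ≤ limsup (fun k => νk k (closure A ∩ Ω)) atTop :=
        limsup_le_limsup (.of_forall fun k => measure_mono (subset_inter subset_closure hAΩ))
    _ ≤ ν A := usc.trans_eq hclosure
end
end

section
/- A distribution T on ℝⁿ belongs to the dual of the homogeneous Sobolev space Ẇ^{1,1}(ℝⁿ) if and only if T = div F for some F ∈ L^∞(ℝⁿ, ℝⁿ). Moreover ‖T‖_{Ẇ^{1,1}(ℝⁿ)*} = min{‖F‖_{L^∞} : div F = T}, where the minimum is attained. -/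
open MeasureTheory Topology Filter Set Metric
open scoped ENNReal NNReal RealInnerProductSpace

noncomputable section

open BVPaper

/-!
If `T = div F` with `F ∈ L^∞`, Hölder's inequality gives `|T φ| ≤ ‖F‖_∞ ‖∇φ‖₁`, so the dual norm
of `T` is at most `‖F‖_∞` for every such `F`. Conversely, a bounded `T` is a bounded functional
`∇φ ↦ T φ` on the subspace of gradients in `L¹(ℝⁿ, ℝⁿ)`; Hahn–Banach extends it to a functional
`Λ` on all of `L¹` of the same norm, and `Λ` is represented by a field `G` with `‖G‖_∞ ≤ ‖Λ‖`,
so that `F = -G` attains the minimum. The representation is built shell by shell: on a shell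
`{⌊|x|⌋ = m}`, of finite measure, `L² ⊂ L¹`, and the Riesz representative `G` of `Λ` restricted
to `L²` satisfies `∫_t |G|² = Λ(1_t G) ≤ ‖Λ‖ ∫_t |G|` for every `t`, hence `|G| ≤ ‖Λ‖` a.e.
-/

theorem LinearMap.exists_extension_of_norm_le_mul_norm {𝕜 V W : Type*} [RCLike 𝕜]
    [AddCommGroup V] [Module 𝕜 V] [NormedAddCommGroup W] [NormedSpace 𝕜 W]
    (f : V →ₗ[𝕜] 𝕜) (g : V →ₗ[𝕜] W) {C : ℝ} (hC : 0 ≤ C) (h : ∀ v, ‖f v‖ ≤ C * ‖g v‖) :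
    ∃ Λ : StrongDual 𝕜 W, ‖Λ‖ ≤ C ∧ ∀ v, Λ (g v) = f v := by
  have hker : LinearMap.ker g ≤ LinearMap.ker f := fun v hv => by
    simpa [show g v = 0 from hv] using h v
  let f₀ : LinearMap.range g →ₗ[𝕜] 𝕜 :=
    (LinearMap.ker g).liftQ f hker ∘ₗ g.quotKerEquivRange.symm.toLinearMap
  have hf₀ : ∀ v, f₀ ⟨g v, LinearMap.mem_range_self g v⟩ = f v := fun v => by
    simp [f₀, LinearMap.quotKerEquivRange_symm_apply_image]
  have hbound : ∀ w, ‖f₀ w‖ ≤ C * ‖w‖ := by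
    rintro ⟨_, v, rfl⟩
    simpa [hf₀] using h v
  obtain ⟨Λ, hΛ, hnorm⟩ := exists_extension_norm_eq _ (f₀.mkContinuous C hbound)
  refine ⟨Λ, hnorm ▸ LinearMap.mkContinuous_norm_le _ hC _, fun v => ?_⟩
  simpa [hf₀] using hΛ ⟨g v, LinearMap.mem_range_self g v⟩

namespace MeasureTheory

variable {α E : Type*} [MeasurableSpace α] {μ : Measure α} [NormedAddCommGroup E]

section IndicatorL2ToL1

variable {s : Set α}

theorem memLp_one_indicator_of_memLp_two (hs : MeasurableSet s) (hμs : μ s ≠ ∞) {g : α → E}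
    (hg : MemLp g 2 (μ.restrict s)) :
    MemLp (s.indicator g) 1 μ :=
  have : IsFiniteMeasure (μ.restrict s) := isFiniteMeasure_restrict.2 hμs
  (memLp_indicator_iff_restrict hs).2 (hg.mono_exponent one_le_two)

theorem norm_toLp_indicator_le (hs : MeasurableSet s) (hμs : μ s ≠ ∞) {g : α → E}
    (hg : MemLp g 2 (μ.restrict s)) :
    ‖(memLp_one_indicator_of_memLp_two hs hμs hg).toLp (s.indicator g)‖
      ≤ (μ s ^ (1 / 2 : ℝ)).toReal * ‖hg.toLp g‖ := by
  have hfin : μ s ^ (1 / 2 : ℝ) ≠ ∞ := ENNReal.rpow_ne_top_of_nonneg (by norm_num) hμs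
  have hHolder := eLpNorm_le_eLpNorm_mul_rpow_measure_univ (μ := μ.restrict s) one_le_two
    hg.aestronglyMeasurable
  rw [Measure.restrict_apply_univ, ← eLpNorm_indicator_eq_eLpNorm_restrict hs] at hHolder
  norm_num at hHolder
  rw [Lp.norm_toLp, Lp.norm_toLp, mul_comm, ← ENNReal.toReal_mul]
  exact ENNReal.toReal_mono (ENNReal.mul_ne_top hg.eLpNorm_ne_top hfin) hHolder

variable [NormedSpace ℝ E] (hs : MeasurableSet s) (hμs : μ s ≠ ∞)

variable (μ) in
noncomputable def Lp.indicatorL2ToL1 : Lp E 2 (μ.restrict s) →L[ℝ] Lp E 1 μ :=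
  LinearMap.mkContinuous
    { toFun := fun h => (memLp_one_indicator_of_memLp_two hs hμs (Lp.memLp h)).toLp _
      map_add' := fun h h' => by
        have h1 := memLp_one_indicator_of_memLp_two hs hμs (Lp.memLp h)
        have h1' := memLp_one_indicator_of_memLp_two hs hμs (Lp.memLp h')
        ext1
        filter_upwards [MemLp.coeFn_toLp (memLp_one_indicator_of_memLp_two hs hμs
            (Lp.memLp (h + h'))), Lp.coeFn_add (h1.toLp _) (h1'.toLp _), h1.coeFn_toLp,
          h1'.coeFn_toLp, (ae_eq_restrict_iff_indicator_ae_eq hs).1 (Lp.coeFn_add h h')]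
          with x h2 h3 h4 h5 h6
        refine h2.trans (h6.trans (Eq.trans ?_ h3.symm))
        rw [Pi.add_apply, h4, h5, Set.indicator_add', Pi.add_apply]
      map_smul' := fun c h => by
        ext1
        have h1 := memLp_one_indicator_of_memLp_two hs hμs (Lp.memLp h)
        filter_upwards [MemLp.coeFn_toLp (memLp_one_indicator_of_memLp_two hs hμs
            (Lp.memLp (c • h))), Lp.coeFn_smul c (h1.toLp _), h1.coeFn_toLp,
          (ae_eq_restrict_iff_indicator_ae_eq hs).1 (Lp.coeFn_smul c h)] with x h2 h3 h4 h5
        refine h2.trans (h5.trans (Eq.trans ?_ h3.symm))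
        rw [Pi.smul_apply, h4]
        exact Set.indicator_const_smul_apply s c _ x }
    (μ s ^ (1 / 2 : ℝ)).toReal fun h => by
      simpa using norm_toLp_indicator_le hs hμs (Lp.memLp h)

theorem Lp.coeFn_indicatorL2ToL1 (h : Lp E 2 (μ.restrict s)) :
    ⇑(Lp.indicatorL2ToL1 μ hs hμs h) =ᵐ[μ] s.indicator h :=
  (memLp_one_indicator_of_memLp_two hs hμs (Lp.memLp h)).coeFn_toLp

theorem Lp.indicatorL2ToL1_toLp {g : α → E} (hg : MemLp g 2 (μ.restrict s)) :
    ⇑(Lp.indicatorL2ToL1 μ hs hμs (hg.toLp g)) =ᵐ[μ] s.indicator g :=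
  (Lp.coeFn_indicatorL2ToL1 hs hμs _).trans
    ((ae_eq_restrict_iff_indicator_ae_eq hs).1 hg.coeFn_toLp)

theorem Lp.norm_indicatorL2ToL1 (h : Lp E 2 (μ.restrict s)) :
    ‖Lp.indicatorL2ToL1 μ hs hμs h‖ = ∫ x in s, ‖h x‖ ∂μ := by
  rw [L1.norm_eq_integral_norm, ← integral_indicator hs]
  refine integral_congr_ae ?_
  filter_upwards [Lp.coeFn_indicatorL2ToL1 hs hμs h] with x hx
  rw [hx, norm_indicator_eq_indicator_norm]

end IndicatorL2ToL1

theorem ae_norm_le_of_forall_setIntegral_sq_le [IsFiniteMeasure μ] {F : α → E}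
    (hF : MemLp F 2 μ) {c : ℝ} (hc : 0 ≤ c)
    (h : ∀ t, MeasurableSet t → ∫ x in t, ‖F x‖ ^ 2 ∂μ ≤ c * ∫ x in t, ‖F x‖ ∂μ) :
    ∀ᵐ x ∂μ, ‖F x‖ ≤ c := by
  have hsq : (fun x => ‖F x‖ ^ 2) ≤ᵐ[μ] fun x => c * ‖F x‖ :=
    ae_le_of_forall_setIntegral_le hF.norm.integrable_sq
      ((hF.norm.integrable one_le_two).const_mul c) fun t ht _ => by
        rw [integral_const_mul]; exact h t ht
  filter_upwards [hsq] with x hx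
  nlinarith [norm_nonneg (F x)]

theorem stronglyMeasurable_apply_index {k : α → ℕ} (hk : Measurable k) {F : ℕ → α → E}
    (hF : ∀ m, StronglyMeasurable (F m)) : StronglyMeasurable fun x => F (k x) x := by
  refine stronglyMeasurable_of_tendsto (f := fun N x =>
    ∑ m ∈ Finset.range N, (k ⁻¹' {m}).indicator (F m) x) atTop
    (fun N => Finset.stronglyMeasurable_fun_sum _ fun m _ =>
      (hF m).indicator (hk (measurableSet_singleton m))) (tendsto_pi_nhds.2 fun x => ?_)
  refine tendsto_const_nhds.congr' (eventually_atTop.2 ⟨k x + 1, fun N hN => ?_⟩)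
  dsimp only
  rw [Finset.sum_eq_single_of_mem (k x) (Finset.mem_range.2 hN)
    fun m _ hm => Set.indicator_of_notMem (fun h => hm h.symm) _]
  exact (Set.indicator_of_mem (show x ∈ k ⁻¹' {k x} from rfl) _).symm

section InnerProductSpace

variable [InnerProductSpace ℝ E] [CompleteSpace E]

theorem L2.exists_integral_inner_eq_of_abs_le [IsFiniteMeasure μ]
    (ℓ : StrongDual ℝ (Lp E 2 μ)) {c : ℝ} (hc : 0 ≤ c)
    (hℓ : ∀ f : Lp E 2 μ, |ℓ f| ≤ c * ∫ x, ‖f x‖ ∂μ) :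
    ∃ F : α → E, StronglyMeasurable F ∧ (∀ᵐ x ∂μ, ‖F x‖ ≤ c) ∧
      ∀ f : Lp E 2 μ, ℓ f = ∫ x, ⟪F x, f x⟫ ∂μ := by
  set F := (InnerProductSpace.toDual ℝ (Lp E 2 μ)).symm ℓ
  have hrep : ∀ f : Lp E 2 μ, ℓ f = ∫ x, ⟪F x, f x⟫ ∂μ := fun f => by
    rw [← L2.inner_def, InnerProductSpace.toDual_symm_apply]
  refine ⟨F, Lp.stronglyMeasurable F,
    ae_norm_le_of_forall_setIntegral_sq_le (Lp.memLp F) hc fun t ht => ?_, hrep⟩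
  have hFt := (Lp.memLp F).indicator ht
  have hinner : ℓ (hFt.toLp _) = ∫ x in t, ‖F x‖ ^ 2 ∂μ := by
    rw [hrep, ← integral_indicator ht]
    refine integral_congr_ae ?_
    filter_upwards [hFt.coeFn_toLp] with x hx
    by_cases hxt : x ∈ t <;> simp [hx, hxt]
  have hnorm : ∫ x, ‖hFt.toLp (t.indicator F) x‖ ∂μ = ∫ x in t, ‖F x‖ ∂μ := by
    rw [← integral_indicator ht]
    refine integral_congr_ae ?_
    filter_upwards [hFt.coeFn_toLp] with x hx
    rw [hx, norm_indicator_eq_indicator_norm]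
  calc ∫ x in t, ‖F x‖ ^ 2 ∂μ ≤ |ℓ (hFt.toLp _)| := hinner ▸ le_abs_self _
    _ ≤ c * ∫ x in t, ‖F x‖ ∂μ := hnorm ▸ hℓ _

theorem Lp.exists_setIntegral_inner_eq {s : Set α} (hs : MeasurableSet s) (hμs : μ s ≠ ∞)
    (Λ : StrongDual ℝ (Lp E 1 μ)) :
    ∃ F : α → E, StronglyMeasurable F ∧ (∀ᵐ x ∂μ.restrict s, ‖F x‖ ≤ ‖Λ‖) ∧
      ∀ f : Lp E 2 (μ.restrict s),
        Λ (Lp.indicatorL2ToL1 μ hs hμs f) = ∫ x in s, ⟪F x, f x⟫ ∂μ := by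
  have := isFiniteMeasure_restrict.2 hμs
  refine L2.exists_integral_inner_eq_of_abs_le (Λ.comp (Lp.indicatorL2ToL1 μ hs hμs))
    (norm_nonneg Λ) fun f => ?_
  simpa [Lp.norm_indicatorL2ToL1] using Λ.le_opNorm (Lp.indicatorL2ToL1 μ hs hμs f)

theorem Lp.exists_integral_inner_eq {k : α → ℕ} (hk : Measurable k)
    (hfin : ∀ m, μ (k ⁻¹' {m}) ≠ ∞) (Λ : StrongDual ℝ (Lp E 1 μ)) :
    ∃ G : α → E, StronglyMeasurable G ∧ (∀ᵐ x ∂μ, ‖G x‖ ≤ ‖Λ‖) ∧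
      ∀ (g : α → E) (hg : MemLp g 1 μ), MemLp g 2 μ → (∃ K, ∀ x, K ≤ k x → g x = 0) →
        Λ (hg.toLp g) = ∫ x, ⟪G x, g x⟫ ∂μ := by
  set A : ℕ → Set α := fun m => k ⁻¹' {m}
  have hA : ∀ m, MeasurableSet (A m) := fun m => hk (measurableSet_singleton m)
  set J := fun m => Lp.indicatorL2ToL1 (E := E) μ (hA m) (hfin m)
  choose F hFm hFb hFr using fun m => Lp.exists_setIntegral_inner_eq (hA m) (hfin m) Λ
  have hGm : StronglyMeasurable fun x => F (k x) x := stronglyMeasurable_apply_index hk hFm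
  have hGb : ∀ᵐ x ∂μ, ‖F (k x) x‖ ≤ ‖Λ‖ := by
    have := fun m => (ae_restrict_iff' (hA m)).1 (hFb m)
    filter_upwards [ae_all_iff.2 this] with x hx using hx (k x) rfl
  refine ⟨fun x => F (k x) x, hGm, hGb, fun g hg1 hg2 ⟨K, hK⟩ => ?_⟩
  set S := ⋃ m ∈ Finset.range K, A m
  have hdisj : (Finset.range K : Set ℕ).PairwiseDisjoint A := Set.pairwiseDisjoint_fiber k _
  have hgS : ∀ x, x ∉ S → g x = 0 := fun x hx => hK x <| not_lt.1 fun hxK =>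
    hx (Set.mem_biUnion (Finset.mem_range.2 hxK) rfl)
  have hdecomp : ∀ x, g x = ∑ m ∈ Finset.range K, (A m).indicator g x := fun x => by
    rw [← Finset.indicator_biUnion_apply _ _ hdisj,
      Set.indicator_eq_self.2 fun x hx => by_contra fun h => hx (hgS x h)]
  have hΛ : Λ (hg1.toLp g) = ∑ m ∈ Finset.range K, Λ (J m ((hg2.restrict (A m)).toLp g)) := by
    rw [← map_sum]
    congr 1
    ext1
    filter_upwards [hg1.coeFn_toLp, Lp.coeFn_fun_finsetSum (Finset.range K)
      fun m => J m ((hg2.restrict (A m)).toLp g), ae_all_iff.2 fun m =>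
      Lp.indicatorL2ToL1_toLp (hA m) (hfin m) (hg2.restrict (A m))] with x h1 h2 h3
    rw [h1, h2, hdecomp x]
    exact Finset.sum_congr rfl fun m _ => (h3 m).symm
  have hint : Integrable (fun x => ⟪F (k x) x, g x⟫) μ := by
    refine (memLp_one_iff_integrable.1 hg1).norm.const_mul ‖Λ‖ |>.mono'
      (hGm.aestronglyMeasurable.inner hg1.aestronglyMeasurable) ?_
    filter_upwards [hGb] with x hx
    exact (norm_inner_le_norm _ _).trans (mul_le_mul_of_nonneg_right hx (norm_nonneg _))
  rw [hΛ, ← setIntegral_eq_integral_of_forall_compl_eq_zero fun x hx => by simp [hgS x hx],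
    integral_biUnion_finset _ (fun m _ => hA m) hdisj fun m _ => hint.integrableOn]
  refine Finset.sum_congr rfl fun m _ => ?_
  rw [hFr]
  refine setIntegral_congr_ae (hA m) ?_
  filter_upwards [(ae_restrict_iff' (hA m)).1 (hg2.restrict (A m)).coeFn_toLp] with x hx hxA
  rw [hx hxA, show k x = m from hxA]

end InnerProductSpace

end MeasureTheory

section Gradient

variable {F : Type*} [NormedAddCommGroup F] [InnerProductSpace ℝ F] [CompleteSpace F]
  {f g : F → ℝ} {x : F}

theorem gradient_add (hf : DifferentiableAt ℝ f x) (hg : DifferentiableAt ℝ g x) :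
    gradient (f + g) x = gradient f x + gradient g x := by
  simp [gradient, fderiv_add hf hg]

theorem gradient_const_smul (c : ℝ) (hf : DifferentiableAt ℝ f x) :
    gradient (c • f) x = c • gradient f x := by
  simp [gradient, fderiv_const_smul hf]

end Gradient

namespace BVPaper

variable {n : ℕ} {Ω : Set (Eucl n)} {φ : Eucl n → ℝ}

theorem IsTest.differentiable (hφ : IsTest Ω φ) : Differentiable ℝ φ :=
  hφ.1.differentiable (by simp)

theorem IsTest.continuous_gradient (hφ : IsTest Ω φ) : Continuous (gradient φ) :=
  (InnerProductSpace.toDual ℝ (Eucl n)).symm.continuous.comp (hφ.1.continuous_fderiv (by simp))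

theorem IsTest.hasCompactSupport_gradient (hφ : IsTest Ω φ) : HasCompactSupport (gradient φ) :=
  (hφ.2.1.fderiv ℝ).comp_left (map_zero _)

theorem IsTest.memLp_gradient (hφ : IsTest Ω φ) (p : ℝ≥0∞) : MemLp (gradient φ) p volume :=
  hφ.continuous_gradient.memLp_of_hasCompactSupport hφ.hasCompactSupport_gradient

theorem IsTest.integrable_gradient (hφ : IsTest Ω φ) : Integrable (gradient φ) volume :=
  memLp_one_iff_integrable.1 (hφ.memLp_gradient 1)

theorem IsTest.exists_gradient_eq_zero_of_le_floor (hφ : IsTest Ω φ) :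
    ∃ K : ℕ, ∀ x : Eucl n, K ≤ ⌊‖x‖⌋₊ → gradient φ x = 0 := by
  obtain ⟨r, hr⟩ := hφ.hasCompactSupport_gradient.isCompact.isBounded.subset_ball 0
  refine ⟨⌈r⌉₊, fun x hx => image_eq_zero_of_notMem_tsupport fun hxs => ?_⟩
  have hxr : ‖x‖ < r := mem_ball_zero_iff.1 (hr hxs)
  have : r ≤ ‖x‖ := (Nat.le_ceil r).trans <|
    (Nat.cast_le.2 hx).trans (Nat.floor_le (norm_nonneg x))
  linarith

theorem volume_floor_norm_preimage_ne_top (m : ℕ) :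
    volume {x : Eucl n | ⌊‖x‖⌋₊ = m} ≠ ∞ := by
  refine ne_top_of_le_ne_top measure_closedBall_lt_top.ne
    (measure_mono (t := closedBall (0 : Eucl n) (m + 1)) fun x hx => ?_)
  rw [mem_closedBall_zero_iff, ← show ⌊‖x‖⌋₊ = m from hx]
  exact (Nat.lt_floor_add_one _).le

def testFunctions (n : ℕ) : Submodule ℝ (Eucl n → ℝ) where
  carrier := {φ | IsTest Set.univ φ}
  add_mem' hφ hψ := ⟨hφ.1.add hψ.1, hφ.2.1.add hψ.2.1, subset_univ _⟩
  zero_mem' := ⟨contDiff_const, HasCompactSupport.zero, subset_univ _⟩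
  smul_mem' c _ hφ := ⟨hφ.1.const_smul c, hφ.2.1.smul_left, subset_univ _⟩

theorem mem_testFunctions : φ ∈ testFunctions n ↔ IsTest Set.univ φ := Iff.rfl

variable {T : (Eucl n → ℝ) → ℝ}

def TestLinear.toLinearMap (hT : TestLinear T) : testFunctions n →ₗ[ℝ] ℝ where
  toFun φ := T φ
  map_add' φ ψ := by simpa using hT φ ψ φ.2 ψ.2 1 1
  map_smul' c φ := by simpa using hT φ 0 φ.2 (testFunctions n).zero_mem c 0

noncomputable def gradientL1 (n : ℕ) :
    testFunctions n →ₗ[ℝ] Lp (Eucl n) 1 (volume : Measure (Eucl n)) where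
  toFun φ :=
    MemLp.toLp (gradient (φ : Eucl n → ℝ)) ((mem_testFunctions.1 φ.2).memLp_gradient 1)
  map_add' φ ψ := by
    rw [← MemLp.toLp_add]
    exact MemLp.toLp_congr _ _ (Eventually.of_forall fun x =>
      gradient_add ((mem_testFunctions.1 φ.2).differentiable x)
        ((mem_testFunctions.1 ψ.2).differentiable x))
  map_smul' c φ := by
    rw [RingHom.id_apply, ← MemLp.toLp_const_smul]
    exact MemLp.toLp_congr _ _ (Eventually.of_forall fun x =>
      gradient_const_smul c ((mem_testFunctions.1 φ.2).differentiable x))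

theorem norm_gradientL1 (φ : testFunctions n) :
    ‖gradientL1 n φ‖ = ∫ x, ‖gradient (φ : Eucl n → ℝ) x‖ :=
  L1.norm_of_fun_eq_integral_norm (mem_testFunctions.1 φ.2).integrable_gradient

theorem lintegral_nnnorm_gradient (hφ : IsTest Ω φ) :
    ∫⁻ x, (‖gradient φ x‖₊ : ℝ≥0∞) = ENNReal.ofReal (∫ x, ‖gradient φ x‖) :=
  (ofReal_integral_norm_eq_lintegral_enorm hφ.integrable_gradient).symm

theorem distNormW11_le_ofReal {C : ℝ} (hC : 0 ≤ C)
    (h : ∀ φ : Eucl n → ℝ, IsTest Set.univ φ → |T φ| ≤ C * ∫ x, ‖gradient φ x‖) :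
    distNormW11 T ≤ ENNReal.ofReal C :=
  iSup₂_le fun φ hφ => ENNReal.div_le_of_le_mul <| by
    rw [lintegral_nnnorm_gradient hφ, ← ENNReal.ofReal_mul hC]
    exact ENNReal.ofReal_le_ofReal (h φ hφ)

theorem distNormW11_ne_top
    (h : ∃ C : ℝ, ∀ φ : Eucl n → ℝ, IsTest Set.univ φ → |T φ| ≤ C * ∫ x, ‖gradient φ x‖) :
    distNormW11 T ≠ ⊤ := by
  obtain ⟨C, hC⟩ := h
  refine ne_top_of_le_ne_top ENNReal.ofReal_ne_top (distNormW11_le_ofReal (le_max_right C 0)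
    fun φ hφ => (hC φ hφ).trans <|
      mul_le_mul_of_nonneg_right (le_max_left C 0) (integral_nonneg fun x => norm_nonneg _))

theorem abs_le_toReal_distNormW11_mul (hT : distNormW11 T ≠ ⊤) (hφ : IsTest Set.univ φ) :
    |T φ| ≤ (distNormW11 T).toReal * ∫ x, ‖gradient φ x‖ := by
  have h : ENNReal.ofReal |T φ| / ∫⁻ x, (‖gradient φ x‖₊ : ℝ≥0∞) ≤ distNormW11 T :=
    le_iSup₂ (f := fun φ (_ : IsTest Set.univ φ) =>
      ENNReal.ofReal |T φ| / ∫⁻ x, (‖gradient φ x‖₊ : ℝ≥0∞)) φ hφ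
  rw [lintegral_nnnorm_gradient hφ,
    ENNReal.div_le_iff_le_mul (Or.inr hT) (Or.inl ENNReal.ofReal_ne_top),
    ← ENNReal.ofReal_toReal hT, ← ENNReal.ofReal_mul ENNReal.toReal_nonneg] at h
  exact (ENNReal.ofReal_le_ofReal_iff (mul_nonneg ENNReal.toReal_nonneg
    (integral_nonneg fun x => norm_nonneg _))).1 h

theorem distNormW11_le_eLpNorm_top {F : Eucl n → Eucl n} (hdiv : IsDivOf F T) :
    distNormW11 T ≤ eLpNorm F ⊤ volume := by
  refine iSup₂_le fun φ hφ => ENNReal.div_le_of_le_mul ?_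
  have hHolder := eLpNorm_le_eLpNorm_top_mul_eLpNorm (μ := volume) 1 F
    hφ.continuous_gradient.aestronglyMeasurable
    (fun a b => ⟪a, b⟫) 1 (Eventually.of_forall fun x => by
      simpa using nnnorm_inner_le_nnnorm (𝕜 := ℝ) (F x) (gradient φ x))
  rw [ENNReal.coe_one, one_mul, eLpNorm_one_eq_lintegral_enorm,
    eLpNorm_one_eq_lintegral_enorm] at hHolder
  calc ENNReal.ofReal |T φ| = ‖∫ x, ⟪F x, gradient φ x⟫‖ₑ := by
        rw [hdiv φ hφ, abs_neg, Real.enorm_eq_ofReal_abs]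
    _ ≤ ∫⁻ x, ‖⟪F x, gradient φ x⟫‖ₑ := enorm_integral_le_lintegral_enorm _
    _ ≤ _ := hHolder

theorem exists_isDivOf_eLpNorm_le (hT : TestLinear T)
    (h : ∃ C : ℝ, ∀ φ : Eucl n → ℝ, IsTest Set.univ φ → |T φ| ≤ C * ∫ x, ‖gradient φ x‖) :
    ∃ F : Eucl n → Eucl n, AEStronglyMeasurable F volume ∧ IsDivOf F T ∧
      eLpNorm F ⊤ volume ≤ distNormW11 T := by
  have hfin := distNormW11_ne_top h
  obtain ⟨Λ, hΛ, hΛT⟩ := LinearMap.exists_extension_of_norm_le_mul_norm hT.toLinearMap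
    (gradientL1 n) ENNReal.toReal_nonneg fun φ => by
      rw [norm_gradientL1, Real.norm_eq_abs]
      exact abs_le_toReal_distNormW11_mul hfin (mem_testFunctions.1 φ.2)
  obtain ⟨G, hGm, hGb, hGrep⟩ := Lp.exists_integral_inner_eq
    (Nat.measurable_floor.comp measurable_norm) volume_floor_norm_preimage_ne_top Λ
  refine ⟨-G, hGm.aestronglyMeasurable.neg, fun φ hφ => ?_, ?_⟩
  · calc T φ = Λ (gradientL1 n ⟨φ, hφ⟩) := (hΛT ⟨φ, hφ⟩).symm
      _ = ∫ x, ⟪G x, gradient φ x⟫ :=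
        hGrep _ (hφ.memLp_gradient 1) (hφ.memLp_gradient 2)
          hφ.exists_gradient_eq_zero_of_le_floor
      _ = -∫ x, ⟪(-G) x, gradient φ x⟫ := by
        simp only [Pi.neg_apply, inner_neg_left, integral_neg, neg_neg]
  · calc eLpNorm (-G) ⊤ volume = eLpNormEssSup G volume := by
          rw [eLpNorm_neg, eLpNorm_exponent_top]
      _ ≤ ENNReal.ofReal ‖Λ‖ := eLpNormEssSup_le_of_ae_bound hGb
      _ ≤ distNormW11 T := ENNReal.ofReal_le_of_le_toReal hΛ

end BVPaper

/-- Characterization of the dual of the homogeneous Sobolev space `Ẇ^{1,1}(ℝⁿ)`: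
`T ∈ Ẇ^{1,1}(ℝⁿ)*` iff `T = div F` for some `F ∈ L^∞`, and the dual norm is the
minimum of `‖F‖_∞` over such `F` (the minimum being attained). -/
theorem statement6 (n : ℕ) (T : (Eucl n → ℝ) → ℝ) (hT : TestLinear T) :
    ((∃ C : ℝ, ∀ φ : Eucl n → ℝ, IsTest Set.univ φ →
        |T φ| ≤ C * ∫ x, ‖gradient φ x‖) ↔
      ∃ F : Eucl n → Eucl n, AEStronglyMeasurable F volume ∧
        eLpNorm F ⊤ volume ≠ ⊤ ∧ IsDivOf F T) ∧
    ((∃ C : ℝ, ∀ φ : Eucl n → ℝ, IsTest Set.univ φ →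
        |T φ| ≤ C * ∫ x, ‖gradient φ x‖) →
      ∃ F : Eucl n → Eucl n, AEStronglyMeasurable F volume ∧ IsDivOf F T ∧
        eLpNorm F ⊤ volume = distNormW11 T ∧
        ∀ F' : Eucl n → Eucl n, AEStronglyMeasurable F' volume → IsDivOf F' T →
          distNormW11 T ≤ eLpNorm F' ⊤ volume) := by
  refine ⟨⟨fun h => ?_, fun ⟨F, _, hFtop, hdiv⟩ => ?_⟩, fun h => ?_⟩
  · obtain ⟨F, hF, hdiv, hle⟩ := exists_isDivOf_eLpNorm_le hT h
    exact ⟨F, hF, ne_top_of_le_ne_top (distNormW11_ne_top h) hle, hdiv⟩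
  · exact ⟨_, fun φ => abs_le_toReal_distNormW11_mul
      (ne_top_of_le_ne_top hFtop (distNormW11_le_eLpNorm_top hdiv))⟩
  · obtain ⟨F, hF, hdiv, hle⟩ := exists_isDivOf_eLpNorm_le hT h
    exact ⟨F, hF, hdiv, le_antisymm hle (distNormW11_le_eLpNorm_top hdiv),
      fun F' _ hdiv' => distNormW11_le_eLpNorm_top hdiv'⟩
end
end

section
/- Let Ω ⊆ ℝⁿ be open and μ a locally finite signed Radon measure on Ω such that |μ(U)| ≤ C·H^{n-1}(∂U) for every smooth bounded open set U compactly contained in Ω. Then for every compact set A ⊆ Ω with H^{n-1}(A) = 0, one has μ(A) = 0. -/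
open MeasureTheory Topology Filter Set Metric
open scoped ENNReal NNReal RealInnerProductSpace

noncomputable section

open BVPaper

/-!
Let `P`, `N` be the restrictions of `μp`, `μn` to a relatively compact neighbourhood of `A` and
`σ = P + N`. As `P ⟂ N`, Besicovitch differentiation shows that at `σ`-a.e. point one of `P`, `N`
has density zero with respect to `σ` on small balls `B`; there `σ(B) ≤ 2 |P(B) - N(B)|`, while the
hypothesis applied to `B` gives `|P(B) - N(B)| ≤ C H^{n-1}(∂B) = O(r^{n-1})`. So `σ`-a.e. point has
finite upper `(n-1)`-density for `σ`, and covering such points by sets of small diameter bounds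
`σ` by a multiple of `H^{n-1}` there; hence `σ(A) = 0`.
-/

theorem hausdorffMeasure_eq_top_of_neg {X : Type*} [EMetricSpace X] [MeasurableSpace X]
    [BorelSpace X] {d : ℝ} (hd : d < 0) {s : Set X} (hs : s.Nonempty) : μH[d] s = ⊤ :=
  (Measure.hausdorffMeasure_zero_or_top hd s).resolve_left
    (one_pos.trans_le (Measure.one_le_hausdorffMeasure_zero_of_nonempty hs)).ne'

open scoped Pointwise in
theorem hausdorffMeasure_sphere {E : Type*} [NormedAddCommGroup E] [NormedSpace ℝ E]
    [MeasurableSpace E] [BorelSpace E] {d : ℝ} (hd : 0 ≤ d) (x : E) {r : ℝ} (hr : 0 < r) :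
    μH[d] (sphere x r) = ENNReal.ofReal r ^ d * μH[d] (sphere (0 : E) 1) := by
  have hsphere : sphere x r = x +ᵥ r • sphere (0 : E) 1 := by
    rw [smul_sphere' hr.ne', smul_zero, vadd_sphere, vadd_eq_add, add_zero, Real.norm_eq_abs,
      abs_of_pos hr, mul_one]
  rw [hsphere, measure_vadd, Measure.hausdorffMeasure_smul₀ hd hr.ne', ENNReal.smul_def,
    smul_eq_mul, ENNReal.coe_rpow_of_nonneg _ hd, Real.nnnorm_of_nonneg hr.le, ENNReal.ofReal,
    Real.toNNReal_of_nonneg hr.le]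

theorem lipschitzOnWith_normalize {V : Type*} [NormedAddCommGroup V] [NormedSpace ℝ V] :
    LipschitzOnWith 2 (NormedSpace.normalize : V → V) {x | 1 ≤ ‖x‖} := by
  refine LipschitzOnWith.of_dist_le_mul fun x (hx : 1 ≤ ‖x‖) y (hy : 1 ≤ ‖y‖) => ?_
  have hx0 : 0 < ‖x‖ := one_pos.trans_le hx
  have hy0 : 0 < ‖y‖ := one_pos.trans_le hy
  have hsplit : NormedSpace.normalize x - NormedSpace.normalize y =
      ‖x‖⁻¹ • (x - y) + (‖x‖⁻¹ - ‖y‖⁻¹) • y := by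
    simp only [NormedSpace.normalize, smul_sub, sub_smul]; abel
  have hcoef : |‖x‖⁻¹ - ‖y‖⁻¹| * ‖y‖ ≤ ‖x‖⁻¹ * ‖x - y‖ := by
    rw [inv_sub_inv hx0.ne' hy0.ne', abs_div, abs_of_pos (mul_pos hx0 hy0), div_mul_eq_mul_div,
      div_le_iff₀ (mul_pos hx0 hy0), abs_sub_comm]
    calc |‖x‖ - ‖y‖| * ‖y‖ ≤ ‖x - y‖ * ‖y‖ := by gcongr; exact abs_norm_sub_norm_le x y
      _ = ‖x‖⁻¹ * ‖x - y‖ * (‖x‖ * ‖y‖) := by field_simp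
  calc dist (NormedSpace.normalize x) (NormedSpace.normalize y)
      ≤ ‖‖x‖⁻¹ • (x - y)‖ + ‖(‖x‖⁻¹ - ‖y‖⁻¹) • y‖ := by
        rw [dist_eq_norm, hsplit]; exact norm_add_le _ _
    _ ≤ 2 * (‖x‖⁻¹ * ‖x - y‖) := by
        rw [norm_smul, norm_smul, Real.norm_eq_abs, Real.norm_eq_abs, abs_inv, abs_norm]
        linarith
    _ ≤ 2 * dist x y := by
        rw [dist_eq_norm]
        gcongr
        exact mul_le_of_le_one_left (norm_nonneg _) (inv_le_one_of_one_le₀ hx)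

theorem isometry_insertNth {Y : Type*} [PseudoMetricSpace Y] {m : ℕ} (i : Fin (m + 1)) (c : Y) :
    Isometry (Fin.insertNth (α := fun _ => Y) i c) :=
  Isometry.of_dist_eq fun u v => by simp [Fin.dist_insertNth_insertNth]

theorem hausdorffMeasure_sphere_pi_lt_top (m : ℕ) :
    μH[m] (sphere (0 : Fin (m + 1) → ℝ) 1) < ⊤ := by
  set cube : Set (Fin m → ℝ) := univ.pi fun _ => Icc (-1) 1
  have hcube : μH[m] cube < ⊤ := by
    have h : (μH[m] : Measure (Fin m → ℝ)) = volume := by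
      simpa using hausdorffMeasure_pi_real (ι := Fin m)
    rw [h]
    exact (isCompact_univ_pi fun _ => isCompact_Icc).measure_lt_top
  have hcover : sphere (0 : Fin (m + 1) → ℝ) 1 ⊆
      ⋃ i, (Fin.insertNth (α := fun _ => ℝ) i 1 '' cube ∪
        Fin.insertNth (α := fun _ => ℝ) i (-1) '' cube) := by
    intro v hv
    rw [mem_sphere_zero_iff_norm] at hv
    obtain ⟨i, -, hi⟩ := Finset.univ.exists_max_image (fun j => ‖v j‖) Finset.univ_nonempty
    have hvi : ‖v i‖ = 1 :=
      le_antisymm (hv ▸ norm_le_pi_norm v i) (hv ▸ (pi_norm_le_iff_of_nonneg (norm_nonneg _)).2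
        fun j => hi j (Finset.mem_univ j))
    have hcube : i.removeNth v ∈ cube := fun j _ =>
      abs_le.1 (hv ▸ norm_le_pi_norm v _)
    refine mem_iUnion.2 ⟨i, ?_⟩
    rcases abs_eq zero_le_one |>.1 hvi with h | h
    · exact Or.inl ⟨_, hcube, by rw [← h, Fin.insertNth_self_removeNth]⟩
    · exact Or.inr ⟨_, hcube, by rw [← h, Fin.insertNth_self_removeNth]⟩
  refine (measure_mono hcover).trans_lt ((measure_iUnion_fintype_le _ _).trans_lt ?_)
  refine ENNReal.sum_lt_top.2 fun i _ => (measure_union_le _ _).trans_lt ?_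
  rw [(isometry_insertNth i 1).hausdorffMeasure_image (Or.inl m.cast_nonneg),
    (isometry_insertNth i (-1)).hausdorffMeasure_image (Or.inl m.cast_nonneg)]
  exact ENNReal.add_lt_top.2 ⟨hcube, hcube⟩

theorem hausdorffMeasure_unitSphere_lt_top (m : ℕ) :
    μH[m] (sphere (0 : EuclideanSpace ℝ (Fin (m + 1))) 1) < ⊤ := by
  set g : (Fin (m + 1) → ℝ) → EuclideanSpace ℝ (Fin (m + 1)) :=
    fun v => NormedSpace.normalize (WithLp.toLp 2 v)
  have hmaps : MapsTo (WithLp.toLp 2) (sphere (0 : Fin (m + 1) → ℝ) 1) {x | 1 ≤ ‖x‖} :=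
    fun v hv => by
      simpa [mem_sphere_zero_iff_norm.1 hv] using
        (PiLp.antilipschitzWith_toLp 2 fun _ : Fin (m + 1) => ℝ).le_mul_dist v 0
  have hg := lipschitzOnWith_normalize.comp
    (PiLp.lipschitzWith_toLp 2 fun _ : Fin (m + 1) => ℝ).lipschitzOnWith hmaps
  have hcover : sphere 0 1 ⊆ g '' sphere 0 1 := by
    intro y hy
    have hy0 : 0 < ‖WithLp.ofLp y‖ := norm_pos_iff.2 fun h => ne_of_mem_sphere hy one_ne_zero
      (WithLp.ofLp_injective 2 (h.trans (WithLp.ofLp_zero 2).symm))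
    refine ⟨‖WithLp.ofLp y‖⁻¹ • WithLp.ofLp y, ?_, ?_⟩
    · rw [mem_sphere_zero_iff_norm, norm_smul, norm_inv, norm_norm, inv_mul_cancel₀ hy0.ne']
    · simp only [g, WithLp.toLp_smul, WithLp.toLp_ofLp,
        NormedSpace.normalize_smul_of_pos (inv_pos.2 hy0)]
      exact NormedSpace.normalize_eq_self_of_norm_eq_one (mem_sphere_zero_iff_norm.1 hy)
  exact (measure_mono hcover).trans_lt ((hg.hausdorffMeasure_image_le m.cast_nonneg).trans_lt
    (ENNReal.mul_lt_top (ENNReal.rpow_lt_top_of_nonneg m.cast_nonneg ENNReal.coe_ne_top)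
      (hausdorffMeasure_sphere_pi_lt_top m)))

theorem measure_inter_le_mul_ediam_rpow {X : Type*} [PseudoMetricSpace X] [MeasurableSpace X]
    (σ : Measure X) {d δ : ℝ} {c : ℝ≥0} {s t : Set X}
    (h : ∀ x ∈ s, ∀ r ∈ Ioo 0 δ, σ (ball x r) ≤ c * ENNReal.ofReal r ^ d)
    (ht : ediam t < ENNReal.ofReal δ) : σ (t ∩ s) ≤ c * ediam t ^ d := by
  rcases (t ∩ s).eq_empty_or_nonempty with he | ⟨x, hxt, hxs⟩
  · simp [he]
  set D := (ediam t).toReal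
  have hDδ : D < δ := ENNReal.toReal_lt_of_lt_ofReal ht
  have hball : ∀ r ∈ Ioo D δ, σ (t ∩ s) ≤ c * ENNReal.ofReal r ^ d := by
    rintro r ⟨hDr, hrδ⟩
    refine (measure_mono fun y hy => ?_).trans
      (h x hxs r ⟨ENNReal.toReal_nonneg.trans_lt hDr, hrδ⟩)
    rw [mem_ball, dist_edist]
    exact (ENNReal.toReal_mono ht.ne_top (edist_le_ediam_of_mem hy.1 hxt)).trans_lt hDr
  have hcont : Tendsto (fun r : ℝ => (c : ℝ≥0∞) * ENNReal.ofReal r ^ d) (𝓝[>] D)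
      (𝓝 (c * ediam t ^ d)) := by
    rw [← ENNReal.ofReal_toReal ht.ne_top]
    exact (ENNReal.Tendsto.const_mul ((ENNReal.continuous_rpow_const.comp
      ENNReal.continuous_ofReal).tendsto D) (Or.inr ENNReal.coe_ne_top)).mono_left
      nhdsWithin_le_nhds
  exact ge_of_tendsto hcont (mem_of_superset (Ioo_mem_nhdsGT hDδ) hball)

section HausdorffDensity

variable {X : Type*} [MetricSpace X] [MeasurableSpace X] [BorelSpace X]

theorem measure_le_mul_hausdorffMeasure_of_measure_ball_le (σ : Measure X) {d δ : ℝ}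
    {c : ℝ≥0} (hc : c ≠ 0) (hδ : 0 < δ) {s : Set X}
    (h : ∀ x ∈ s, ∀ r ∈ Ioo 0 δ, σ (ball x r) ≤ c * ENNReal.ofReal r ^ d) :
    σ s ≤ c * μH[d] s := by
  have hle : σ.restrict s ≤ Measure.mkMetric ((c : ℝ≥0∞) • fun D : ℝ≥0∞ => D ^ d) := by
    refine Measure.le_mkMetric _ _ (ENNReal.ofReal (δ / 2)) (by positivity) fun t ht => ?_
    have ht' : ediam (closure t) < ENNReal.ofReal δ := by
      rw [ediam_closure]
      exact ht.trans_lt ((ENNReal.ofReal_lt_ofReal_iff hδ).2 (half_lt_self hδ))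
    calc σ.restrict s t ≤ σ.restrict s (closure t) := measure_mono subset_closure
      _ = σ (closure t ∩ s) := Measure.restrict_apply isClosed_closure.measurableSet
      _ ≤ c * ediam (closure t) ^ d := measure_inter_le_mul_ediam_rpow σ h ht'
      _ = _ := by rw [ediam_closure]; rfl
  calc σ s = σ.restrict s s := (Measure.restrict_apply_self σ s).symm
    _ ≤ ((c : ℝ≥0∞) • μH[d]) s := (hle s).trans (Measure.mkMetric_mono_smul ENNReal.coe_ne_top
          (ENNReal.coe_ne_zero.2 hc) (Eventually.of_forall fun _ => le_rfl) s)
    _ = c * μH[d] s := rfl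

theorem measure_eq_zero_of_hausdorffMeasure_eq_zero_of_measure_ball_le (σ : Measure X) {d : ℝ}
    {s : Set X} (hs : μH[d] s = 0)
    (h : ∀ᵐ x ∂σ, x ∈ s → ∃ c : ℝ≥0, ∀ᶠ r in 𝓝[>] 0, σ (ball x r) ≤ c * ENNReal.ofReal r ^ d) :
    σ s = 0 := by
  set good : ℕ → Set X := fun k =>
    {x | ∀ r ∈ Ioo 0 (k + 1 : ℝ)⁻¹, σ (ball x r) ≤ (k + 1 : ℝ≥0) * ENNReal.ofReal r ^ d}
  have hgood : ∀ k, σ (s ∩ good k) = 0 := fun k =>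
    nonpos_iff_eq_zero.1 <| (measure_le_mul_hausdorffMeasure_of_measure_ball_le σ
      (Nat.cast_add_one_ne_zero k) (by positivity) fun x hx => hx.2).trans <| by
        rw [measure_mono_null inter_subset_left hs, mul_zero]
  refine measure_mono_null (fun x hx => ?_) (measure_union_null
    (measure_iUnion_null hgood) (ae_iff.1 h))
  by_cases hx' : ∃ c : ℝ≥0, ∀ᶠ r in 𝓝[>] 0, σ (ball x r) ≤ c * ENNReal.ofReal r ^ d
  · obtain ⟨c, hc⟩ := hx'
    obtain ⟨δ, hδ, hδc⟩ := mem_nhdsGT_iff_exists_Ioo_subset.1 hc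
    obtain ⟨k, hk⟩ := exists_nat_gt (max (c : ℝ) δ⁻¹)
    have hkc : c ≤ (k + 1 : ℝ≥0) := by
      rw [← NNReal.coe_le_coe]; push_cast; linarith [le_max_left (c : ℝ) δ⁻¹]
    have hkδ : (k + 1 : ℝ)⁻¹ ≤ δ :=
      (inv_lt_of_inv_lt₀ hδ (by linarith [le_max_right (c : ℝ) δ⁻¹])).le
    refine Or.inl (mem_iUnion.2 ⟨k, hx, fun r hr => ?_⟩)
    exact (hδc ⟨hr.1, hr.2.trans_le hkδ⟩).trans (by gcongr)
  · exact Or.inr fun h' => hx' (h' hx)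

end HausdorffDensity

theorem ENNReal.add_le_two_mul_ofReal_abs_sub {q r : ℝ≥0∞} (hq : q ≠ ⊤) (hr : r ≠ ⊤)
    (h : q ≤ 4⁻¹ * (q + r)) : q + r ≤ 2 * ENNReal.ofReal |q.toReal - r.toReal| := by
  have h' := ENNReal.toReal_mono (by finiteness) h
  rw [ENNReal.toReal_mul, ENNReal.toReal_add hq hr, ENNReal.toReal_inv,
    ENNReal.toReal_ofNat] at h'
  rw [← ENNReal.ofReal_toReal (ENNReal.add_ne_top.2 ⟨hq, hr⟩), ENNReal.toReal_add hq hr,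
    ← ENNReal.ofReal_ofNat 2, ← ENNReal.ofReal_mul zero_le_two]
  refine ENNReal.ofReal_le_ofReal ?_
  rw [abs_sub_comm]
  linarith [le_abs_self (r.toReal - q.toReal)]

section BallDensity

variable {X : Type*} [PseudoMetricSpace X] [MeasurableSpace X]

theorem measure_ball_le_of_measure_closedBall_le (Q σ : Measure X) (x : X) {ρ : ℝ} {c : ℝ≥0∞}
    (h : ∀ r ∈ Ioo 0 ρ, Q (closedBall x r) ≤ c * σ (closedBall x r)) :
    Q (ball x ρ) ≤ c * σ (ball x ρ) := by
  rcases le_or_gt ρ 0 with hρ | hρ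
  · simp [ball_eq_empty.2 hρ]
  obtain ⟨u, hu_mono, hu_mem, hu_lim⟩ := exists_seq_strictMono_tendsto' hρ
  have hball : ball x ρ = ⋃ k, closedBall x (u k) := by
    ext y
    simp only [mem_ball, mem_iUnion, mem_closedBall]
    exact ⟨fun hy => (hu_lim.eventually (lt_mem_nhds hy)).exists.imp fun _ => le_of_lt,
      fun ⟨k, hk⟩ => hk.trans_lt (hu_mem k).2⟩
  rw [hball, Monotone.measure_iUnion fun i j hij => closedBall_subset_closedBall
    (hu_mono.monotone hij)]
  exact iSup_le fun k => (h _ (hu_mem k)).trans (by gcongr; exact subset_iUnion_of_subset k le_rfl)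

theorem eventually_measure_add_ball_le {Q R : Measure X} [IsFiniteMeasure Q] [IsFiniteMeasure R]
    {x : X} {f : ℝ → ℝ≥0∞}
    (hQ : Tendsto (fun r => Q (closedBall x r) / (Q + R) (closedBall x r)) (𝓝[>] 0) (𝓝 0))
    (hf : ∀ᶠ r in 𝓝[>] 0,
      ENNReal.ofReal |(Q (ball x r)).toReal - (R (ball x r)).toReal| ≤ f r) :
    ∀ᶠ r in 𝓝[>] 0, (Q + R) (ball x r) ≤ 2 * f r := by
  have hsmall : ∀ᶠ r in 𝓝[>] 0, Q (closedBall x r) ≤ 4⁻¹ * (Q + R) (closedBall x r) :=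
    (hQ.eventually (ge_mem_nhds (by norm_num))).mono fun r hr =>
      (ENNReal.div_le_iff_le_mul (Or.inr (by norm_num)) (Or.inl (measure_ne_top _ _))).1 hr
  obtain ⟨δ, hδ, hδQ⟩ := mem_nhdsGT_iff_exists_Ioo_subset.1 hsmall
  filter_upwards [hf, Ioo_mem_nhdsGT hδ] with ρ hρ hρδ
  have hball := measure_ball_le_of_measure_closedBall_le Q (Q + R) x fun r hr =>
    hδQ ⟨hr.1, hr.2.trans hρδ.2⟩
  rw [Measure.add_apply] at hball ⊢
  exact (ENNReal.add_le_two_mul_ofReal_abs_sub (measure_ne_top _ _) (measure_ne_top _ _)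
    hball).trans (by gcongr)

end BallDensity

section Besicovitch

variable {X : Type*} [MetricSpace X] [MeasurableSpace X] [BorelSpace X]
  [SecondCountableTopology X] [HasBesicovitchCovering X]

theorem MeasureTheory.Measure.MutuallySingular.ae_tendsto_div_closedBall {P N : Measure X}
    [IsFiniteMeasure P] [IsFiniteMeasure N] (h : P ⟂ₘ N) :
    ∀ᵐ x ∂(P + N),
      Tendsto (fun r => P (closedBall x r) / (P + N) (closedBall x r)) (𝓝[>] 0) (𝓝 0) ∨
      Tendsto (fun r => N (closedBall x r) / (P + N) (closedBall x r)) (𝓝[>] 0) (𝓝 0) := by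
  have hP : P.rnDeriv (P + N) =ᵐ[N] 0 :=
    Measure.rnDeriv_eq_zero_of_mutuallySingular h (Measure.le_add_left le_rfl).absolutelyContinuous
  have hN : N.rnDeriv (P + N) =ᵐ[P] 0 := Measure.rnDeriv_eq_zero_of_mutuallySingular h.symm
    (Measure.le_add_right le_rfl).absolutelyContinuous
  filter_upwards [Besicovitch.ae_tendsto_rnDeriv P (P + N),
    Besicovitch.ae_tendsto_rnDeriv N (P + N),
    ae_add_measure_iff.2 ⟨hN.mono fun _ => Or.inr, hP.mono fun _ => Or.inl⟩]
    with x hxP hxN hx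
  rcases hx with hx | hx
  · exact Or.inl (by simpa [hx] using hxP)
  · exact Or.inr (by simpa [hx] using hxN)

theorem measure_add_eq_zero_of_abs_sub_measure_ball_le {P N : Measure X} [IsFiniteMeasure P]
    [IsFiniteMeasure N] (hPN : P ⟂ₘ N) {d : ℝ} {K : ℝ≥0} {s : Set X} (hs : μH[d] s = 0)
    (h : ∀ x ∈ s, ∀ᶠ r in 𝓝[>] 0,
      ENNReal.ofReal |(P (ball x r)).toReal - (N (ball x r)).toReal| ≤ K * ENNReal.ofReal r ^ d) :
    (P + N) s = 0 := by
  refine measure_eq_zero_of_hausdorffMeasure_eq_zero_of_measure_ball_le (P + N) hs ?_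
  filter_upwards [hPN.ae_tendsto_div_closedBall] with x hx hxs
  refine ⟨2 * K, ?_⟩
  rcases hx with hP | hN
  · filter_upwards [eventually_measure_add_ball_le hP (h x hxs)] with r hr
    simpa [mul_assoc] using hr
  · rw [add_comm] at hN ⊢
    have h' : ∀ᶠ r in 𝓝[>] 0, ENNReal.ofReal |(N (ball x r)).toReal - (P (ball x r)).toReal| ≤
        K * ENNReal.ofReal r ^ d := (h x hxs).mono fun r hr => by rwa [abs_sub_comm]
    filter_upwards [eventually_measure_add_ball_le hN h'] with r hr
    simpa [mul_assoc] using hr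

end Besicovitch

theorem smoothBoundedOpen_ball {n : ℕ} (x : Eucl n) {r : ℝ} (hr : 0 < r) :
    SmoothBoundedOpen (ball x r) := by
  refine ⟨isOpen_ball, isBounded_ball, fun z hz => ⟨fun y => ‖y - x‖ ^ 2 - r ^ 2,
    ((contDiff_norm_sq ℝ).comp (contDiff_id.sub contDiff_const)).sub contDiff_const, ?_, ?_,
    1, one_pos, fun y _ => ?_⟩⟩
  all_goals rw [frontier_ball x hr.ne', mem_sphere, dist_eq_norm] at hz
  · simp [hz]
  · have hd : HasFDerivAt (fun y : Eucl n => ‖y - x‖ ^ 2 - r ^ 2) _ z :=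
      (((hasFDerivAt_id z).sub_const x).norm_sq).sub_const (r ^ 2)
    rw [hd.fderiv]
    intro h0
    have := congrArg (fun L => L (z - x)) h0
    simp [← inner_sub_left, hz, hr.ne'] at this
  · rw [mem_ball, dist_eq_norm, sub_neg, pow_lt_pow_iff_left₀ (norm_nonneg _) hr.le two_ne_zero]

theorem eventually_abs_measVal_ball_le {m : ℕ} {Ω : Set (Eucl (m + 1))} (hΩ : IsOpen Ω)
    {μp μn : Measure (Eucl (m + 1))} {C : ℝ}
    (hsm : ∀ U : Set (Eucl (m + 1)), SmoothBoundedOpen U → closure U ⊆ Ω →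
      ENNReal.ofReal |measVal μp μn U| ≤ ENNReal.ofReal C * μH[m] (frontier U))
    {x : Eucl (m + 1)} (hx : x ∈ Ω) :
    ∀ᶠ r in 𝓝[>] 0, ENNReal.ofReal |measVal μp μn (ball x r)| ≤
      ENNReal.ofReal C * μH[m] (sphere (0 : Eucl (m + 1)) 1) * ENNReal.ofReal r ^ (m : ℝ) := by
  filter_upwards [(eventually_closedBall_subset (hΩ.mem_nhds hx)).filter_mono nhdsWithin_le_nhds,
    self_mem_nhdsWithin] with r hrΩ (hr : 0 < r)
  calc ENNReal.ofReal |measVal μp μn (ball x r)|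
      ≤ ENNReal.ofReal C * μH[m] (frontier (ball x r)) :=
        hsm _ (smoothBoundedOpen_ball x hr) (closure_ball_subset_closedBall.trans hrΩ)
    _ = _ := by rw [frontier_ball x hr.ne', hausdorffMeasure_sphere m.cast_nonneg x hr]; ring

theorem BVPaper.LocFinOn.isFiniteMeasure_restrict {n : ℕ} {Ω V : Set (Eucl n)}
    {ρ : Measure (Eucl n)} (hρ : LocFinOn Ω ρ) (hV : IsCompact (closure V)) (hVΩ : closure V ⊆ Ω) :
    IsFiniteMeasure (ρ.restrict V) := by
  refine ⟨?_⟩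
  rw [Measure.restrict_apply_univ]
  refine (measure_mono subset_closure).trans_lt (hV.measure_lt_top_of_nhdsWithin fun x hx => ?_)
  obtain ⟨s, hs, hsρ⟩ := hρ.2 x (hVΩ hx)
  exact ⟨s, mem_nhdsWithin_of_mem_nhds hs, hsρ.lt_top⟩

/-- If `|μ(U)| ≤ C·H^{n-1}(∂U)` for all smooth `U ⊂⊂ Ω`, then `μ` vanishes on
compact sets of vanishing `H^{n-1}` measure. -/
theorem statement7 (n : ℕ) (Ω : Set (Eucl n)) (hΩ : IsOpen Ω)
    (μp μn : Measure (Eucl n)) (hsing : μp.MutuallySingular μn)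
    (hlfp : LocFinOn Ω μp) (hlfn : LocFinOn Ω μn) (C : ℝ)
    (hsm : ∀ U : Set (Eucl n), SmoothBoundedOpen U → closure U ⊆ Ω →
      ENNReal.ofReal |measVal μp μn U| ≤
        ENNReal.ofReal C * μH[((n : ℝ) - 1)] (frontier U))
    (A : Set (Eucl n)) (hA : IsCompact A) (hAΩ : A ⊆ Ω)
    (hH : μH[((n : ℝ) - 1)] A = 0) :
    μp A = μn A := by
  rcases n with _ | m
  · obtain rfl : A = ∅ := not_nonempty_iff_eq_empty.1 fun hne => ENNReal.top_ne_zero <|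
      (hausdorffMeasure_eq_top_of_neg (by norm_num) hne).symm.trans hH
    simp
  rw [Nat.cast_add_one, add_sub_cancel_right] at hsm hH
  obtain ⟨V, hVo, hAV, hVΩ, hVc⟩ := exists_open_between_and_isCompact_closure hA hΩ hAΩ
  have := hlfp.isFiniteMeasure_restrict hVc hVΩ
  have := hlfn.isFiniteMeasure_restrict hVc hVΩ
  obtain ⟨K, hK⟩ : ∃ K : ℝ≥0,
      (K : ℝ≥0∞) = ENNReal.ofReal C * μH[m] (sphere (0 : Eucl (m + 1)) 1) :=
    ⟨_, ENNReal.coe_toNNReal (ENNReal.mul_ne_top ENNReal.ofReal_ne_top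
      (hausdorffMeasure_unitSphere_lt_top m).ne)⟩
  have hnull : (μp.restrict V + μn.restrict V) A = 0 := by
    refine measure_add_eq_zero_of_abs_sub_measure_ball_le
      ((hsing.restrict V).symm.restrict V).symm hH (K := K) fun x hx => ?_
    filter_upwards [eventually_abs_measVal_ball_le hΩ hsm (hAΩ hx),
      (eventually_ball_subset (hVo.mem_nhds (hAV hx))).filter_mono nhdsWithin_le_nhds]
      with r hr hrV
    rwa [Measure.restrict_eq_self _ hrV, Measure.restrict_eq_self _ hrV, hK]
  rw [Measure.add_apply, add_eq_zero, Measure.restrict_eq_self _ hAV,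
    Measure.restrict_eq_self _ hAV] at hnull
  rw [hnull.1, hnull.2]
end
end
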